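/- arXiv:1801.03653 — 8 statements merged into one kernel-verified Lean document; each statement's English description precedes it below -/
import Mathlib

section
/- For any positive integers j, k and s, the Cohen–Ramanujan sum satisfies c_k^{(s)}(j) = Σ_{d : d^s divides gcd-type condition} d^s μ(k/d), i.e. c_k^{(s)}(j) = Σ over positive integers d with d ∣ k and d^s ∣ j of d^s · μ(k/d). -/
/-!
The condition `(m, k^s)_s = 1` is detected by Möbius inversion: the `d ∣ k` with `d^s ∣ m` are
exactly the divisors of their `lcm`, so `∑_{d ∣ k, d^s ∣ m} μ(d)` is `1` or `0` according as
the condition holds or not. After swapping the sums, the multiples `m = d^s t` of `d^s` in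
`[1, k^s]` run over a full period of the `(k/d)^s`-th roots of unity `e^{2πi t j / (k/d)^s}`,
whose sum is `(k/d)^s` if `(k/d)^s ∣ j` and `0` otherwise. Re-indexing `d ↦ k/d` gives the formula.
-/

open Finset ArithmeticFunction Complex
open scoped ArithmeticFunction.Moebius

theorem Nat.lcm_pow_dvd {a b s m : ℕ} (ha : a ^ s ∣ m) (hb : b ^ s ∣ m) :
    Nat.lcm a b ^ s ∣ m := by
  rcases eq_or_ne m 0 with rfl | hm
  · exact dvd_zero _
  rcases eq_or_ne s 0 with rfl | hs
  · simp
  have ha0 : a ≠ 0 := by rintro rfl; simp [zero_pow hs, hm] at ha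
  have hb0 : b ≠ 0 := by rintro rfl; simp [zero_pow hs, hm] at hb
  rw [← Nat.factorization_le_iff_dvd (by positivity) hm] at ha hb ⊢
  rw [Nat.factorization_pow] at ha hb ⊢
  rw [Nat.factorization_lcm ha0 hb0]
  intro p
  simpa [← Nat.mul_max_mul_left] using And.intro (ha p) (hb p)

theorem Finset.lcm_id_pow_dvd {S : Finset ℕ} {s m : ℕ} (h : ∀ a ∈ S, a ^ s ∣ m) :
    S.lcm id ^ s ∣ m := by
  induction S using Finset.induction with
  | empty => simp
  | insert a S _ ih =>
    rw [Finset.lcm_insert]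
    exact Nat.lcm_pow_dvd (h a (mem_insert_self a S)) (ih fun b hb => h b (mem_insert_of_mem hb))

theorem sum_divisors_moebius (n : ℕ) : ∑ d ∈ n.divisors, μ d = if n = 1 then 1 else 0 := by
  rw [← coe_mul_zeta_apply, moebius_mul_coe_zeta, one_apply]

theorem sum_moebius_divisors_filter_pow_dvd {k : ℕ} (hk : k ≠ 0) (s m : ℕ) :
    ∑ d ∈ k.divisors.filter (fun d => d ^ s ∣ m), μ d =
      if ∀ d ∈ k.divisors, d ^ s ∣ m → d = 1 then 1 else 0 := by
  set S := k.divisors.filter (fun d => d ^ s ∣ m)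
  have hgk : S.lcm id ∣ k := Finset.lcm_dvd fun d hd => Nat.dvd_of_mem_divisors (mem_filter.1 hd).1
  have hg0 : S.lcm id ≠ 0 := ne_zero_of_dvd_ne_zero hk hgk
  -- `S` is closed under `lcm` and under taking divisors, so it is the divisor set of its `lcm`.
  have hS : S = (S.lcm id).divisors := by
    ext d
    refine ⟨fun hd => Nat.mem_divisors.2 ⟨Finset.dvd_lcm hd, hg0⟩, fun hd => ?_⟩
    have hdg := Nat.dvd_of_mem_divisors hd
    exact mem_filter.2 ⟨Nat.mem_divisors.2 ⟨hdg.trans hgk, hk⟩,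
      (pow_dvd_pow_of_dvd hdg s).trans (Finset.lcm_id_pow_dvd fun a ha => (mem_filter.1 ha).2)⟩
  have hcond : (∀ d ∈ k.divisors, d ^ s ∣ m → d = 1) ↔ S.lcm id = 1 := by
    refine ⟨fun h => Nat.dvd_one.1 (Finset.lcm_dvd fun d hd => ?_), fun h d hd hds => ?_⟩
    · obtain ⟨hdk, hds⟩ := mem_filter.1 hd
      simp [h d hdk hds]
    · have : d ∈ (S.lcm id).divisors := hS ▸ mem_filter.2 ⟨hd, hds⟩
      simpa [h] using this
  rw [hS, sum_divisors_moebius]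
  exact if_congr hcond.symm rfl rfl

theorem sum_Icc_pow_of_pow_eq_one {K : Type*} [Field K] [DecidableEq K] {z : K} {n : ℕ}
    (hz : z ^ n = 1) : ∑ t ∈ Icc 1 n, z ^ t = if z = 1 then (n : K) else 0 := by
  have hshift : ∑ t ∈ Icc 1 n, z ^ t = z * ∑ t ∈ range n, z ^ t := by
    rw [mul_sum, range_eq_Ico, ← Ico_add_one_right_eq_Icc]
    simpa [pow_succ'] using (sum_Ico_add' (fun t => z ^ t) 0 n 1).symm
  split_ifs with h
  · simp [h]
  · rw [hshift, geom_sum_eq h, hz, sub_self, zero_div, mul_zero]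

theorem sum_Icc_exp_two_pi_mul_I (n j : ℕ) :
    ∑ t ∈ Icc 1 n, exp (2 * Real.pi * I * t * j / n) = if n ∣ j then (n : ℂ) else 0 := by
  rcases eq_or_ne n 0 with rfl | hn
  · simp
  have hζ := isPrimitiveRoot_exp n hn
  have hterm : ∀ t : ℕ,
      exp (2 * Real.pi * I * t * j / n) = (exp (2 * Real.pi * I / n) ^ j) ^ t := by
    intro t
    rw [← pow_mul, ← exp_nat_mul]
    congr 1
    push_cast
    ring
  have hz : (exp (2 * Real.pi * I / n) ^ j) ^ n = 1 := by
    rw [pow_right_comm, hζ.pow_eq_one, one_pow]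
  simp only [hterm, sum_Icc_pow_of_pow_eq_one hz, hζ.pow_eq_one_iff_dvd]

theorem sum_filter_dvd_Icc_mul {M : Type*} [AddCommMonoid M] {c : ℕ} (hc : c ≠ 0) (n : ℕ)
    (f : ℕ → M) :
    ∑ m ∈ (Icc 1 (c * n)).filter (c ∣ ·), f m = ∑ t ∈ Icc 1 n, f (c * t) := by
  have hc0 : 0 < c := Nat.pos_of_ne_zero hc
  have hmul : (Icc 1 (c * n)).filter (c ∣ ·) = (Icc 1 n).image (c * ·) := by
    ext m
    simp only [mem_filter, mem_Icc, mem_image]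
    constructor
    · rintro ⟨⟨h1, h2⟩, t, rfl⟩
      exact ⟨t, ⟨Nat.pos_of_mul_pos_left h1, Nat.le_of_mul_le_mul_left h2 hc0⟩, rfl⟩
    · rintro ⟨t, ⟨h1, h2⟩, rfl⟩
      exact ⟨⟨Nat.mul_pos hc0 h1, Nat.mul_le_mul_left c h2⟩, dvd_mul_right c t⟩
  rw [hmul, sum_image fun a _ b _ h => Nat.eq_of_mul_eq_mul_left hc0 h]

theorem sum_filter_dvd_Icc_exp {c : ℕ} (hc : c ≠ 0) (n j : ℕ) :
    ∑ m ∈ (Icc 1 (c * n)).filter (c ∣ ·), exp (2 * Real.pi * I * m * j / (c * n : ℕ)) =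
      if n ∣ j then (n : ℂ) else 0 := by
  rw [sum_filter_dvd_Icc_mul hc, ← sum_Icc_exp_two_pi_mul_I]
  refine sum_congr rfl fun t _ => congrArg exp ?_
  have hc' : (c : ℂ) ≠ 0 := Nat.cast_ne_zero.2 hc
  push_cast
  rw [show 2 * Real.pi * I * (c * t) * j = c * (2 * Real.pi * I * t * j) by ring,
    mul_div_mul_left _ _ hc']

theorem cohen_ramanujan_sum_general (s j k : ℕ) (hk : 0 < k) :
    ∑ m ∈ (Finset.Icc 1 (k ^ s)).filter
        (fun m => ∀ d ∈ k.divisors, d ^ s ∣ m → d = 1),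
      Complex.exp (2 * Real.pi * Complex.I * m * j / (k : ℂ) ^ s)
    = ∑ d ∈ k.divisors.filter (fun d => d ^ s ∣ j),
        (d : ℂ) ^ s * ((ArithmeticFunction.moebius (k / d) : ℤ) : ℂ) := by
  set e : ℕ → ℂ := fun m => exp (2 * Real.pi * I * m * j / (k : ℂ) ^ s)
  have hsieve : ∀ m, (if ∀ d ∈ k.divisors, d ^ s ∣ m → d = 1 then e m else 0) =
      ∑ d ∈ k.divisors, if d ^ s ∣ m then (μ d : ℂ) * e m else 0 := fun m => by
    rw [← sum_filter, ← sum_mul, ← Int.cast_sum, sum_moebius_divisors_filter_pow_dvd hk.ne']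
    split_ifs <;> simp
  have hinner : ∀ d ∈ k.divisors, ∑ m ∈ (Icc 1 (k ^ s)).filter (d ^ s ∣ ·), e m =
      if (k / d) ^ s ∣ j then (((k / d) ^ s : ℕ) : ℂ) else 0 := fun d hd => by
    have hdk := Nat.dvd_of_mem_divisors hd
    have hks : k ^ s = d ^ s * (k / d) ^ s := by rw [← mul_pow, Nat.mul_div_cancel' hdk]
    rw [← sum_filter_dvd_Icc_exp (pow_ne_zero s (ne_zero_of_dvd_ne_zero hk.ne' hdk)), ← hks]
    simp only [e, Nat.cast_pow]
  calc _ = ∑ d ∈ k.divisors, (μ d : ℂ) * ∑ m ∈ (Icc 1 (k ^ s)).filter (d ^ s ∣ ·), e m := by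
        simp only [sum_filter, hsieve, mul_sum, mul_ite, mul_zero]
        exact sum_comm
    _ = ∑ d ∈ k.divisors, (if d ^ s ∣ j then ((d ^ s : ℕ) : ℂ) else 0) * μ (k / d) := by
        conv_rhs => rw [← Nat.sum_div_divisors]
        refine sum_congr rfl fun d hd => ?_
        rw [hinner d hd, Nat.div_div_self (Nat.dvd_of_mem_divisors hd) hk.ne', mul_comm]
    _ = _ := by
        rw [sum_filter]
        refine sum_congr rfl fun d _ => ?_
        split_ifs <;> simp

/-- The Cohen–Ramanujan sum `c_k^{(s)}(j)`, defined as the sum of `exp(2πi m j / k^s)` over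
`1 ≤ m ≤ k^s` with `(m, k^s)_s = 1` (i.e. no divisor `d > 1` of `k` satisfies `d^s ∣ m`),
equals `∑_{d ∣ k, d^s ∣ j} d^s μ(k/d)`. -/
theorem cohen_ramanujan_sum (s j k : ℕ) (hs : 0 < s) (hj : 0 < j) (hk : 0 < k) :
    ∑ m ∈ (Finset.Icc 1 (k ^ s)).filter
        (fun m => ∀ d ∈ k.divisors, d ^ s ∣ m → d = 1),
      Complex.exp (2 * Real.pi * Complex.I * m * j / (k : ℂ) ^ s)
    = ∑ d ∈ k.divisors.filter (fun d => d ^ s ∣ j),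
        (d : ℂ) ^ s * ((ArithmeticFunction.moebius (k / d) : ℤ) : ℂ) :=
  cohen_ramanujan_sum_general s j k hk
end

section
/- For any arithmetical functions f, g and fixed positive integers s, k, one has (1/k^s) Σ_{j=1}^{k^s} s_k^{(s)}(j) log Γ(j/k^s) = log√(2π) · ((f/id_s) * g)(k) − log√(2π) · (f*g)(k)/k^s − (s/(2k^s)) · (f * (g·log))(k), where * denotes Dirichlet convolution. -/
open Finset Real

/-!
Only the terms with `d ^ s ∣ j` contribute, so after exchanging the sums each divisor
`d ∣ k` contributes `f d * g (k / d)` times `∑_{m=1}^{n} log Γ(m / n)` with `n = (k / d) ^ s`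
(substitute `j = d ^ s * m`). That sum is `(n - 1) / 2 * log (2π) - log n / 2`: pairing `m` with
`n - m` and applying Euler's reflection formula reduces it to
`∏_{0<m<n} sin (π m / n) = n / 2 ^ (n - 1)`, which is the absolute value of
`∏_{0<m<n} (1 - ζ ^ m) = n` for a primitive `n`-th root of unity `ζ`.
-/

lemma prod_sin_pi_mul_succ_div (n : ℕ) :
    ∏ j ∈ range n, sin (π * ((j + 1) / (n + 1))) = (n + 1) / 2 ^ n := by
  have hμ : IsPrimitiveRoot (Complex.exp (2 * π * Complex.I / (n + 1 : ℕ))) (n + 1) :=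
    Complex.isPrimitiveRoot_exp (n + 1) n.succ_ne_zero
  have hfactor : ∀ j ∈ range n,
      ‖1 - Complex.exp (2 * π * Complex.I / (n + 1 : ℕ)) ^ (j + 1)‖
        = 2 * sin (π * ((j + 1) / (n + 1))) := by
    intro j hj
    have hjn : (j : ℝ) + 1 ≤ n + 1 := by
      have := mem_range.mp hj; norm_cast; omega
    have hsin : 0 ≤ sin (π * ((j + 1) / (n + 1))) :=
      sin_nonneg_of_nonneg_of_le_pi (by positivity)
        (mul_le_of_le_one_right pi_pos.le (div_le_one_of_le₀ hjn (by positivity)))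
    have harg : ((j + 1 : ℕ) : ℂ) * (2 * π * Complex.I / (n + 1 : ℕ))
        = Complex.I * ((2 * (π * ((j + 1) / (n + 1))) : ℝ) : ℂ) := by
      push_cast; field_simp
    rw [← Complex.exp_nat_mul, norm_sub_rev, harg, Complex.norm_exp_I_mul_ofReal_sub_one,
      mul_div_cancel_left₀ _ two_ne_zero, Real.norm_eq_abs,
      abs_of_nonneg (by positivity)]
  have hnorm := congrArg norm hμ.prod_one_sub_pow_eq_order
  rw [norm_prod, prod_congr rfl hfactor, prod_mul_distrib, prod_const, card_range,
    show ((n : ℂ) + 1) = ((n + 1 : ℕ) : ℂ) by push_cast; rfl, Complex.norm_natCast] at hnorm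
  rw [eq_div_iff (by positivity), mul_comm, hnorm]
  push_cast; rfl

lemma prod_Gamma_succ_div_sq (n : ℕ) :
    (∏ j ∈ range n, Gamma ((j + 1) / (n + 1))) ^ 2 = (2 * π) ^ n / (n + 1) := by
  have hreflect : ∏ j ∈ range n, Gamma (1 - (j + 1) / (n + 1))
      = ∏ j ∈ range n, Gamma ((j + 1) / (n + 1)) := by
    rw [← prod_range_reflect]
    refine prod_congr rfl fun j hj => ?_
    have hj : j + 1 ≤ n := mem_range.mp hj
    rw [Nat.sub_sub, Nat.cast_sub (by omega : 1 + j ≤ n)]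
    congr 1
    field_simp
    push_cast
    ring
  calc (∏ j ∈ range n, Gamma ((j + 1) / (n + 1))) ^ 2
      = ∏ j ∈ range n, Gamma ((j + 1) / (n + 1)) * Gamma (1 - (j + 1) / (n + 1)) := by
        rw [prod_mul_distrib, hreflect, sq]
    _ = ∏ j ∈ range n, π / sin (π * ((j + 1) / (n + 1))) :=
        prod_congr rfl fun j _ => Gamma_mul_Gamma_one_sub _
    _ = (2 * π) ^ n / (n + 1) := by
        rw [prod_div_distrib, prod_const, card_range, prod_sin_pi_mul_succ_div]
        field_simp
        ring

lemma sum_log_Gamma_div (n : ℕ) (hn : n ≠ 0) :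
    ∑ j ∈ Icc 1 n, log (Gamma (j / n)) = (n - 1) / 2 * log (2 * π) - log n / 2 := by
  obtain ⟨m, rfl⟩ := Nat.exists_eq_succ_of_ne_zero hn
  have hlog := congrArg log (prod_Gamma_succ_div_sq m)
  rw [log_pow, log_prod fun j _ => (Gamma_pos_of_pos (by positivity)).ne',
    log_div (by positivity) (by positivity), log_pow] at hlog
  rw [sum_Icc_succ_top (by omega), ← Ico_add_one_right_eq_Icc, sum_Ico_eq_sum_range]
  push_cast
  simp only [add_tsub_cancel_right, div_self (by positivity : (m : ℝ) + 1 ≠ 0), Gamma_one,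
    log_one, add_zero, add_comm (1 : ℝ)]
  linarith

lemma Icc_filter_dvd_eq_map {d : ℕ} (hd : d ≠ 0) (e : ℕ) :
    {j ∈ Icc 1 (d * e) | d ∣ j} = (Icc 1 e).map ⟨(d * ·), mul_right_injective₀ hd⟩ := by
  ext j
  simp only [mem_filter, mem_Icc, mem_map, Function.Embedding.coeFn_mk]
  constructor
  · rintro ⟨⟨hj1, hj2⟩, m, rfl⟩
    exact ⟨m, ⟨Nat.pos_of_mul_pos_left hj1,
      Nat.le_of_mul_le_mul_left hj2 (Nat.pos_of_ne_zero hd)⟩, rfl⟩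
  · rintro ⟨m, ⟨hm1, hm2⟩, rfl⟩
    exact ⟨⟨Nat.mul_pos (Nat.pos_of_ne_zero hd) hm1, Nat.mul_le_mul_left d hm2⟩,
      dvd_mul_right d m⟩

lemma sum_log_Gamma_filter_pow_dvd {d k : ℕ} (hd : d ∈ k.divisors) (s : ℕ) :
    ∑ j ∈ Icc 1 (k ^ s) with d ^ s ∣ j, log (Gamma (j / (k : ℝ) ^ s))
      = (((k / d : ℕ) : ℝ) ^ s - 1) / 2 * log (2 * π) - s * log (k / d : ℕ) / 2 := by
  obtain ⟨⟨e, rfl⟩, hk⟩ := Nat.mem_divisors.mp hd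
  have hd0 : d ≠ 0 := left_ne_zero_of_mul hk
  rw [Nat.mul_div_cancel_left e (Nat.pos_of_ne_zero hd0), mul_pow,
    Icc_filter_dvd_eq_map (pow_ne_zero s hd0), sum_map]
  have hterm : ∀ m : ℕ,
      ((d ^ s * m : ℕ) : ℝ) / ((d * e : ℕ) : ℝ) ^ s = m / ((e ^ s : ℕ) : ℝ) := by
    intro m
    push_cast
    rw [mul_pow, mul_div_mul_left _ _ (by positivity)]
  simp only [Function.Embedding.coeFn_mk, hterm]
  rw [sum_log_Gamma_div _ (pow_ne_zero s (right_ne_zero_of_mul hk))]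
  push_cast
  rw [log_pow]

theorem weighted_gamma_average_general (f g : ℕ → ℝ) (s k : ℕ) :
    (1 / (k : ℝ) ^ s) * ∑ j ∈ Finset.Icc 1 (k ^ s),
        (∑ d ∈ k.divisors.filter (fun d => d ^ s ∣ j), f d * g (k / d)) *
          Real.log (Real.Gamma ((j : ℝ) / (k : ℝ) ^ s))
    = Real.log (Real.sqrt (2 * Real.pi)) *
        (∑ p ∈ k.divisorsAntidiagonal, f p.1 / (p.1 : ℝ) ^ s * g p.2)
      - Real.log (Real.sqrt (2 * Real.pi)) *
        (∑ p ∈ k.divisorsAntidiagonal, f p.1 * g p.2) / (k : ℝ) ^ s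
      - ((s : ℝ) / (2 * (k : ℝ) ^ s)) *
        (∑ p ∈ k.divisorsAntidiagonal, f p.1 * (g p.2 * Real.log p.2)) := by
  have hswap : ∑ j ∈ Icc 1 (k ^ s),
        (∑ d ∈ k.divisors with d ^ s ∣ j, f d * g (k / d)) * log (Gamma (j / (k : ℝ) ^ s))
      = ∑ d ∈ k.divisors, f d * g (k / d) *
          ∑ j ∈ Icc 1 (k ^ s) with d ^ s ∣ j, log (Gamma (j / (k : ℝ) ^ s)) := by
    simp only [sum_mul, mul_sum]
    exact sum_comm' fun j d => by simp only [mem_filter]; tauto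
  rw [hswap, mul_sum, Nat.sum_divisorsAntidiagonal (fun a b => f a / (a : ℝ) ^ s * g b),
    Nat.sum_divisorsAntidiagonal (fun a b => f a * g b),
    Nat.sum_divisorsAntidiagonal (fun a b => f a * (g b * log b)), mul_sum, mul_sum, sum_div,
    mul_sum, ← sum_sub_distrib, ← sum_sub_distrib]
  refine sum_congr rfl fun d hd => ?_
  rw [sum_log_Gamma_filter_pow_dvd hd, log_sqrt (by positivity)]
  obtain ⟨⟨e, rfl⟩, hk⟩ := Nat.mem_divisors.mp hd
  have hd0 : d ≠ 0 := left_ne_zero_of_mul hk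
  rw [Nat.mul_div_cancel_left e (Nat.pos_of_ne_zero hd0)]
  have he0 : e ≠ 0 := right_ne_zero_of_mul hk
  push_cast
  field_simp
  ring

/-- For arithmetical functions `f, g` and positive integers `s, k`, with
`s_k^{(s)}(j) = ∑_{d ∣ k, d^s ∣ j} f(d) g(k/d)`:
`(1/k^s) ∑_{j=1}^{k^s} s_k^{(s)}(j) log Γ(j/k^s)
  = log√(2π)·((f/id_s)*g)(k) − log√(2π)·(f*g)(k)/k^s − (s/(2k^s))·(f*(g·log))(k)`. -/
theorem weighted_gamma_average (f g : ℕ → ℝ) (s k : ℕ) (hs : 0 < s) (hk : 0 < k) :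
    (1 / (k : ℝ) ^ s) * ∑ j ∈ Finset.Icc 1 (k ^ s),
        (∑ d ∈ k.divisors.filter (fun d => d ^ s ∣ j), f d * g (k / d)) *
          Real.log (Real.Gamma ((j : ℝ) / (k : ℝ) ^ s))
    = Real.log (Real.sqrt (2 * Real.pi)) *
        (∑ p ∈ k.divisorsAntidiagonal, f p.1 / (p.1 : ℝ) ^ s * g p.2)
      - Real.log (Real.sqrt (2 * Real.pi)) *
        (∑ p ∈ k.divisorsAntidiagonal, f p.1 * g p.2) / (k : ℝ) ^ s
      - ((s : ℝ) / (2 * (k : ℝ) ^ s)) *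
        (∑ p ∈ k.divisorsAntidiagonal, f p.1 * (g p.2 * Real.log p.2)) :=
  weighted_gamma_average_general f g s k
end

section
/- For any arithmetical functions f, g, fixed positive integers s, m, k: (1/k^s) Σ_{j=0}^{k^s−1} B_m(j/k^s) s_k^{(s)}(j) = B_m · Σ_{dℓ = k} (f(d)/d^s)(g(ℓ)/ℓ^{ms}), where B_m(x) is the m-th Bernoulli polynomial and B_m = B_m(0). -/
/-!
Swapping the two sums, the divisor `d = k / ℓ` contributes `f d * g ℓ` times the sum of
`B_m(j / k^s)` over the multiples `j = d^s i` of `d^s` below `k^s`, that is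
`∑_{i < ℓ^s} B_m(i / ℓ^s)`. By Raabe's multiplication formula
`n^m ∑_{i < n} B_m(x + i/n) = n B_m(n x)` this equals `ℓ^s B_m / ℓ^{ms}`.

Raabe's formula follows from the exponential generating function `t e^{xt} / (e^t - 1)` of the
Bernoulli polynomials: after `t ↦ n t`, the sum over `i` becomes a geometric sum
`∑_{i < n} e^{it} = (e^{nt} - 1) / (e^t - 1)`, leaving `n` times the generating function at `n x`.
-/

open Finset PowerSeries Nat

namespace Polynomial

noncomputable def bernoulliEGF (x : ℚ) : ℚ⟦X⟧ :=
  PowerSeries.mk fun p => (bernoulli p).eval x / p !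

theorem bernoulliEGF_mul_exp_sub_one (x : ℚ) :
    bernoulliEGF x * (exp ℚ - 1) = PowerSeries.X * rescale x (exp ℚ) := by
  convert bernoulli_generating_function x using 3 with p
  simp [bernoulliEGF, div_eq_inv_mul]

theorem exp_pow_sub_one_ne_zero {n : ℕ} (hn : n ≠ 0) : exp ℚ ^ n - 1 ≠ 0 := by
  intro h
  simpa [exp_pow_eq_rescale_exp, coeff_rescale, coeff_exp, hn] using
    congrArg (PowerSeries.coeff 1) h

theorem sum_rescale_bernoulliEGF {n : ℕ} (hn : n ≠ 0) (x : ℚ) :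
    ∑ i ∈ range n, rescale (n : ℚ) (bernoulliEGF (x + i / n))
      = (n : ℚ) • bernoulliEGF (n * x) := by
  have hn' : (n : ℚ) ≠ 0 := Nat.cast_ne_zero.mpr hn
  have hrescaled (y : ℚ) : rescale (n : ℚ) (bernoulliEGF y) * (exp ℚ ^ n - 1)
      = (n : ℚ) • PowerSeries.X * rescale (n * y) (exp ℚ) := by
    simpa [rescale_rescale, rescale_X, mul_comm y, PowerSeries.smul_eq_C_mul,
      exp_pow_eq_rescale_exp] using congrArg (rescale (n : ℚ)) (bernoulliEGF_mul_exp_sub_one y)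
  have hshift (i : ℕ) :
      rescale ((n : ℚ) * (x + i / n)) (exp ℚ) = rescale (n * x) (exp ℚ) * exp ℚ ^ i := by
    rw [exp_pow_eq_rescale_exp, exp_mul_exp_eq_exp_add, mul_add, mul_div_cancel₀ _ hn']
  refine mul_right_cancel₀
    (mul_ne_zero (exp_pow_sub_one_ne_zero hn) (exp_pow_sub_one_ne_zero one_ne_zero)) ?_
  calc (∑ i ∈ range n, rescale (n : ℚ) (bernoulliEGF (x + i / n)))
          * ((exp ℚ ^ n - 1) * (exp ℚ ^ 1 - 1))
      = (n : ℚ) • PowerSeries.X * rescale (n * x) (exp ℚ)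
          * ((∑ i ∈ range n, exp ℚ ^ i) * (exp ℚ - 1)) := by
        simp only [← mul_assoc, sum_mul, hrescaled, hshift, mul_sum, pow_one]
    _ = (n : ℚ) • bernoulliEGF (n * x) * ((exp ℚ ^ n - 1) * (exp ℚ ^ 1 - 1)) := by
        rw [geom_sum_mul, pow_one, mul_comm (exp ℚ ^ n - 1), ← mul_assoc, smul_mul_assoc,
          smul_mul_assoc, smul_mul_assoc, bernoulliEGF_mul_exp_sub_one, smul_mul_assoc, mul_assoc]

theorem pow_mul_sum_bernoulli_eval_add_div {n : ℕ} (hn : n ≠ 0) (m : ℕ) (x : ℚ) :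
    (n : ℚ) ^ m * ∑ i ∈ range n, (bernoulli m).eval (x + i / n)
      = n * (bernoulli m).eval (n * x) := by
  have h := congrArg (PowerSeries.coeff m) (sum_rescale_bernoulliEGF hn x)
  simp only [map_sum, coeff_rescale, PowerSeries.coeff_smul, bernoulliEGF, coeff_mk,
    smul_eq_mul] at h
  have hm : (m ! : ℚ) ≠ 0 := Nat.cast_ne_zero.mpr m.factorial_ne_zero
  rwa [← mul_sum, ← sum_div, mul_div_assoc', mul_div_assoc', div_left_inj' hm] at h

theorem sum_range_eval₂_bernoulli_div {n : ℕ} (hn : n ≠ 0) (m : ℕ) :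
    ∑ i ∈ range n, (bernoulli m).eval₂ (Rat.castHom ℝ) ((i : ℝ) / n)
      = n * _root_.bernoulli m / n ^ m := by
  have hcast (i : ℕ) : (bernoulli m).eval₂ (Rat.castHom ℝ) ((i : ℝ) / n)
      = (((bernoulli m).eval ((i : ℚ) / n) : ℚ) : ℝ) := by
    simpa using eval₂_at_apply (Rat.castHom ℝ) ((i : ℚ) / n)
  have h := pow_mul_sum_bernoulli_eval_add_div hn m 0
  simp only [zero_add, mul_zero, bernoulli_eval_zero] at h
  rw [eq_div_iff (pow_ne_zero _ (Nat.cast_ne_zero.mpr hn)), mul_comm]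
  simp only [hcast]
  exact_mod_cast h

end Polynomial

theorem Finset.sum_range_mul_filter_dvd {M : Type*} [AddCommMonoid M] {a : ℕ} (ha : a ≠ 0)
    (b : ℕ) (F : ℕ → M) :
    ∑ j ∈ (range (a * b)).filter (a ∣ ·), F j = ∑ i ∈ range b, F (a * i) := by
  have himage : (range (a * b)).filter (a ∣ ·) = (range b).image (a * ·) := by
    ext j
    simp only [mem_filter, mem_range, mem_image]
    constructor
    · rintro ⟨hj, i, rfl⟩
      exact ⟨i, lt_of_mul_lt_mul_left hj a.zero_le, rfl⟩
    · rintro ⟨i, hi, rfl⟩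
      exact ⟨Nat.mul_lt_mul_of_pos_left hi (Nat.pos_of_ne_zero ha), dvd_mul_right a i⟩
  rw [himage, sum_image fun _ _ _ _ h => Nat.eq_of_mul_eq_mul_left (Nat.pos_of_ne_zero ha) h]

theorem Polynomial.sum_filter_dvd_eval₂_bernoulli {a b : ℕ} (ha : a ≠ 0) (hb : b ≠ 0) (m : ℕ) :
    ∑ j ∈ (range (a * b)).filter (a ∣ ·), (bernoulli m).eval₂ (Rat.castHom ℝ) ((j : ℝ) / (a * b))
      = b * _root_.bernoulli m / b ^ m := by
  rw [sum_range_mul_filter_dvd (M := ℝ) ha, ← sum_range_eval₂_bernoulli_div hb]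
  refine sum_congr rfl fun i _ => ?_
  rw [Nat.cast_mul, mul_div_mul_left _ _ (Nat.cast_ne_zero.mpr ha)]

theorem bernoulli_weighted_average_general (f g : ℕ → ℝ) (s m k : ℕ) :
    (1 / (k : ℝ) ^ s) * ∑ j ∈ Finset.range (k ^ s),
        Polynomial.eval₂ (Rat.castHom ℝ) ((j : ℝ) / (k : ℝ) ^ s) (Polynomial.bernoulli m) *
          (∑ d ∈ k.divisors.filter (fun d => d ^ s ∣ j), f d * g (k / d))
    = (bernoulli m : ℝ) *
        ∑ p ∈ k.divisorsAntidiagonal,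
          (f p.1 / (p.1 : ℝ) ^ s) * (g p.2 / (p.2 : ℝ) ^ (m * s)) := by
  set B : ℕ → ℝ := fun j =>
    (Polynomial.bernoulli m).eval₂ (Rat.castHom ℝ) ((j : ℝ) / (k : ℝ) ^ s)
  have hswap :
      ∑ j ∈ range (k ^ s), B j * ∑ d ∈ k.divisors.filter (fun d => d ^ s ∣ j), f d * g (k / d)
        = ∑ d ∈ k.divisors,
            (∑ j ∈ (range (k ^ s)).filter (d ^ s ∣ ·), B j) * (f d * g (k / d)) := by
    simp_rw [mul_sum, sum_mul]
    refine sum_comm' fun j d => ?_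
    simp only [mem_filter, mem_range]
    tauto
  rw [hswap,
    Nat.sum_divisorsAntidiagonal (fun d e => f d / (d : ℝ) ^ s * (g e / (e : ℝ) ^ (m * s))),
    mul_sum, mul_sum]
  refine sum_congr rfl fun d hd => ?_
  obtain ⟨⟨e, rfl⟩, hde⟩ := Nat.mem_divisors.mp hd
  obtain ⟨hd0, he0⟩ := mul_ne_zero_iff.mp hde
  have hB : ∑ j ∈ (range ((d * e) ^ s)).filter (d ^ s ∣ ·), B j
      = (e : ℝ) ^ s * bernoulli m / ((e : ℝ) ^ s) ^ m := by
    have h := Polynomial.sum_filter_dvd_eval₂_bernoulli (pow_ne_zero s hd0) (pow_ne_zero s he0) m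
    push_cast [B, mul_pow] at h ⊢
    exact h
  rw [hB, Nat.mul_div_cancel_left e (Nat.pos_of_ne_zero hd0)]
  push_cast
  field_simp
  ring

/-- For arithmetical functions `f, g` and positive integers `s, m, k`:
`(1/k^s) ∑_{j=0}^{k^s−1} B_m(j/k^s) s_k^{(s)}(j)
  = B_m · ∑_{dℓ = k} (f(d)/d^s)(g(ℓ)/ℓ^{ms})`,
where `B_m(x)` is the `m`-th Bernoulli polynomial and `B_m = B_m(0)`. -/
theorem bernoulli_weighted_average (f g : ℕ → ℝ) (s m k : ℕ)
    (hs : 0 < s) (hm : 0 < m) (hk : 0 < k) :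
    (1 / (k : ℝ) ^ s) * ∑ j ∈ Finset.range (k ^ s),
        Polynomial.eval₂ (Rat.castHom ℝ) ((j : ℝ) / (k : ℝ) ^ s) (Polynomial.bernoulli m) *
          (∑ d ∈ k.divisors.filter (fun d => d ^ s ∣ j), f d * g (k / d))
    = (bernoulli m : ℝ) *
        ∑ p ∈ k.divisorsAntidiagonal,
          (f p.1 / (p.1 : ℝ) ^ s) * (g p.2 / (p.2 : ℝ) ^ (m * s)) :=
  bernoulli_weighted_average_general f g s m k
end

section
/- The identity of arithmetical functions (φ_s * φ_s)/id_s = ((μ*μ)/id_s) * τ holds, i.e. for all n ≥ 1, (1/n^s) Σ_{d∣n} φ_s(d) φ_s(n/d) = Σ_{d∣n} ((μ*μ)(d)/d^s) τ(n/d). -/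
open Finset

/-- The Jordan totient function `φ_s = id_s * μ`. -/
noncomputable def jordanPhi (s n : ℕ) : ℝ :=
  ∑ p ∈ n.divisorsAntidiagonal, (p.1 : ℝ) ^ s * ((ArithmeticFunction.moebius p.2 : ℤ) : ℝ)

/-! Since `φ_s = id_s * μ`, commutativity of Dirichlet convolution gives
`φ_s * φ_s = (μ * μ) * (id_s * id_s)`, and `(id_s * id_s)(m) = m^s τ(m)` because every term
`d^s (m/d)^s` equals `m^s`. Dividing by `n^s = d^s (n/d)^s` termwise gives the identity. -/

open ArithmeticFunction

theorem Nat.card_divisorsAntidiagonal (n : ℕ) : #n.divisorsAntidiagonal = #n.divisors := by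
  rw [← Nat.map_div_right_divisors, card_map]

theorem ArithmeticFunction.natCoe_pow_mul_natCoe_pow_apply {R : Type*} [CommSemiring R]
    (s n : ℕ) :
    ((pow s : ArithmeticFunction ℕ) * (pow s : ArithmeticFunction ℕ) : ArithmeticFunction R) n =
      (n : R) ^ s * #n.divisors := by
  rw [mul_apply, ← Nat.card_divisorsAntidiagonal, mul_comm, ← nsmul_eq_mul, ← sum_const]
  refine sum_congr rfl fun p hp => ?_
  obtain ⟨rfl, hn⟩ := Nat.mem_divisorsAntidiagonal.mp hp
  simp [pow_apply, left_ne_zero_of_mul hn, right_ne_zero_of_mul hn, mul_pow]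

theorem jordanPhi_eq_pow_mul_moebius_apply (s n : ℕ) :
    jordanPhi s n = ((pow s : ArithmeticFunction ℕ) * (moebius : ArithmeticFunction ℝ)) n := by
  rw [mul_apply, jordanPhi]
  refine sum_congr rfl fun p hp => ?_
  simp [pow_apply, Nat.left_ne_zero_of_mem_divisorsAntidiagonal hp]

theorem jordan_conv_identity_general (s : ℕ) (n : ℕ) :
    (1 / (n : ℝ) ^ s) * ∑ p ∈ n.divisorsAntidiagonal, jordanPhi s p.1 * jordanPhi s p.2
    = ∑ p ∈ n.divisorsAntidiagonal,
        ((∑ q ∈ p.1.divisorsAntidiagonal,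
            ((ArithmeticFunction.moebius q.1 : ℤ) : ℝ) *
              ((ArithmeticFunction.moebius q.2 : ℤ) : ℝ)) / (p.1 : ℝ) ^ s) *
          (p.2.divisors.card : ℝ) := by
  have hφφ : ∑ p ∈ n.divisorsAntidiagonal, jordanPhi s p.1 * jordanPhi s p.2 =
      ((moebius * moebius : ArithmeticFunction ℝ) *
        ((pow s : ArithmeticFunction ℕ) * (pow s : ArithmeticFunction ℕ) : ArithmeticFunction ℝ)) n := by
    simp_rw [jordanPhi_eq_pow_mul_moebius_apply, ← mul_apply]
    rw [mul_mul_mul_comm, mul_comm]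
  rw [hφφ, mul_apply, mul_sum]
  refine sum_congr rfl fun p hp => ?_
  obtain ⟨rfl, hn⟩ := Nat.mem_divisorsAntidiagonal.mp hp
  have hd : (p.1 : ℝ) ≠ 0 := by exact_mod_cast left_ne_zero_of_mul hn
  have he : (p.2 : ℝ) ≠ 0 := by exact_mod_cast right_ne_zero_of_mul hn
  rw [natCoe_pow_mul_natCoe_pow_apply, mul_apply]
  simp only [intCoe_apply]
  push_cast
  field_simp
  ring

/-- `(φ_s * φ_s)/id_s = ((μ*μ)/id_s) * τ`: for all `n ≥ 1`,
`(1/n^s) ∑_{d∣n} φ_s(d) φ_s(n/d) = ∑_{d∣n} ((μ*μ)(d)/d^s) τ(n/d)`. -/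
theorem jordan_conv_identity (s : ℕ) (hs : 1 ≤ s) (n : ℕ) (hn : 1 ≤ n) :
    (1 / (n : ℝ) ^ s) * ∑ p ∈ n.divisorsAntidiagonal, jordanPhi s p.1 * jordanPhi s p.2
    = ∑ p ∈ n.divisorsAntidiagonal,
        ((∑ q ∈ p.1.divisorsAntidiagonal,
            ((ArithmeticFunction.moebius q.1 : ℤ) : ℝ) *
              ((ArithmeticFunction.moebius q.2 : ℤ) : ℝ)) / (p.1 : ℝ) ^ s) *
          (p.2.divisors.card : ℝ) :=
  jordan_conv_identity_general s n
end

section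
/- The identity of arithmetical functions (ψ_s * φ_s)/id_s = ((μ*|μ|)/id_s) * τ holds, i.e. for all n ≥ 1, (1/n^s) Σ_{d∣n} ψ_s(d) φ_s(n/d) = Σ_{d∣n} ((μ*|μ|)(d)/d^s) τ(n/d). -/
open Finset

/-- The generalized Dedekind function `ψ_s = id_s * |μ|`. -/
noncomputable def dedekindPsi (s n : ℕ) : ℝ :=
  ∑ p ∈ n.divisorsAntidiagonal, (p.1 : ℝ) ^ s * |((ArithmeticFunction.moebius p.2 : ℤ) : ℝ)|

/-!
Pointwise division by the completely multiplicative function `id_s` distributes over Dirichlet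
convolution and sends `id_s` to `ζ`. Hence `ψ_s / id_s = ζ * (|μ| / id_s)` and
`φ_s / id_s = ζ * (μ / id_s)`, and the identity becomes
`ζ * (|μ| / id_s) * (ζ * (μ / id_s)) = (μ / id_s) * (|μ| / id_s) * (ζ * ζ)` with `ζ * ζ = τ`,
which holds because the Dirichlet ring is commutative.
-/

namespace ArithmeticFunction

open scoped ArithmeticFunction.Moebius ArithmeticFunction.zeta

def absMoebius : ArithmeticFunction ℤ :=
  ⟨fun n => |μ n|, by simp⟩

@[simp]
theorem absMoebius_apply (n : ℕ) : absMoebius n = |μ n| := rfl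

theorem pow_apply_mul (k a b : ℕ) : pow k (a * b) = pow k a * pow k b := by
  rcases k.eq_zero_or_pos with rfl | hk
  · simp only [pow_zero_eq_zeta, zeta_apply, mul_eq_zero]
    split_ifs <;> simp_all
  · simp [hk.ne', mul_pow]

section Semifield

variable {R : Type*} [Semifield R]

theorem mul_pdiv_of_map_mul {h : ArithmeticFunction R} (hh : ∀ a b, h (a * b) = h a * h b)
    (f g : ArithmeticFunction R) : (f * g).pdiv h = f.pdiv h * g.pdiv h := by
  ext n
  simp only [pdiv_apply, mul_apply, sum_div]
  refine sum_congr rfl fun p hp => ?_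
  rw [← (Nat.mem_divisorsAntidiagonal.mp hp).1, hh, mul_div_mul_comm]

theorem pdiv_natCoe_pow_apply (f : ArithmeticFunction R) (k n : ℕ) :
    f.pdiv (pow k) n = f n / (n : R) ^ k := by
  rcases eq_or_ne n 0 with rfl | hn
  · simp
  · simp [pdiv_apply, natCoe_apply, hn]

theorem natCoe_pow_pdiv_self [CharZero R] (k : ℕ) :
    (pow k : ArithmeticFunction R).pdiv (pow k) = ζ := by
  ext n
  rcases eq_or_ne n 0 with rfl | hn
  · simp
  · simp [natCoe_apply, hn]

theorem coe_zeta_mul_coe_zeta_apply (n : ℕ) :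
    (ζ * ζ : ArithmeticFunction R) n = #n.divisors := by
  rw [coe_zeta_mul_apply, cast_card]
  exact sum_congr rfl fun d hd => by simp [natCoe_apply, (Nat.pos_of_mem_divisors hd).ne']

end Semifield

end ArithmeticFunction

open ArithmeticFunction
open scoped ArithmeticFunction.Moebius ArithmeticFunction.zeta

theorem dedekindPsi_eq (s n : ℕ) :
    dedekindPsi s n = ((pow s : ArithmeticFunction ℝ) * absMoebius) n := by
  rw [dedekindPsi, mul_apply]
  refine sum_congr rfl fun p hp => ?_
  have hp1 := (Nat.pos_of_mem_divisors (Nat.fst_mem_divisors_of_mem_antidiagonal hp)).ne'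
  simp [natCoe_apply, intCoe_apply, hp1]

theorem jordanPhi_eq (s n : ℕ) :
    jordanPhi s n = ((pow s : ArithmeticFunction ℝ) * μ) n := by
  rw [jordanPhi, mul_apply]
  refine sum_congr rfl fun p hp => ?_
  have hp1 := (Nat.pos_of_mem_divisors (Nat.fst_mem_divisors_of_mem_antidiagonal hp)).ne'
  simp [natCoe_apply, intCoe_apply, hp1]

theorem dedekind_jordan_conv_identity_general (s : ℕ) (n : ℕ) :
    (1 / (n : ℝ) ^ s) * ∑ p ∈ n.divisorsAntidiagonal, dedekindPsi s p.1 * jordanPhi s p.2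
    = ∑ p ∈ n.divisorsAntidiagonal,
        ((∑ q ∈ p.1.divisorsAntidiagonal,
            ((ArithmeticFunction.moebius q.1 : ℤ) : ℝ) *
              |((ArithmeticFunction.moebius q.2 : ℤ) : ℝ)|) / (p.1 : ℝ) ^ s) *
          (p.2.divisors.card : ℝ) := by
  set P : ArithmeticFunction ℝ := ↑(pow s)
  have hP : ∀ a b, P (a * b) = P a * P b := fun a b => by
    simp only [P, natCoe_apply, pow_apply_mul, Nat.cast_mul]
  have lhs : (1 / (n : ℝ) ^ s) * ∑ p ∈ n.divisorsAntidiagonal, dedekindPsi s p.1 * jordanPhi s p.2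
      = ((P * absMoebius) * (P * μ)).pdiv P n := by
    simp only [dedekindPsi_eq, jordanPhi_eq, ← mul_apply, P, pdiv_natCoe_pow_apply]
    exact one_div_mul_eq_div _ _
  have rhs : ∑ p ∈ n.divisorsAntidiagonal,
        ((∑ q ∈ p.1.divisorsAntidiagonal,
            ((ArithmeticFunction.moebius q.1 : ℤ) : ℝ) *
              |((ArithmeticFunction.moebius q.2 : ℤ) : ℝ)|) / (p.1 : ℝ) ^ s) *
          (p.2.divisors.card : ℝ)
      = (((μ : ArithmeticFunction ℝ) * absMoebius).pdiv P * (ζ * ζ)) n := by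
    rw [mul_apply]
    refine sum_congr rfl fun p _ => ?_
    rw [pdiv_natCoe_pow_apply, coe_zeta_mul_coe_zeta_apply, mul_apply]
    simp [intCoe_apply]
  rw [lhs, rhs]
  simp only [mul_pdiv_of_map_mul hP, P, natCoe_pow_pdiv_self]
  congr 1
  ring

/-- `(ψ_s * φ_s)/id_s = ((μ*|μ|)/id_s) * τ`: for all `n ≥ 1`,
`(1/n^s) ∑_{d∣n} ψ_s(d) φ_s(n/d) = ∑_{d∣n} ((μ*|μ|)(d)/d^s) τ(n/d)`. -/
theorem dedekind_jordan_conv_identity (s : ℕ) (hs : 1 ≤ s) (n : ℕ) (hn : 1 ≤ n) :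
    (1 / (n : ℝ) ^ s) * ∑ p ∈ n.divisorsAntidiagonal, dedekindPsi s p.1 * jordanPhi s p.2
    = ∑ p ∈ n.divisorsAntidiagonal,
        ((∑ q ∈ p.1.divisorsAntidiagonal,
            ((ArithmeticFunction.moebius q.1 : ℤ) : ℝ) *
              |((ArithmeticFunction.moebius q.2 : ℤ) : ℝ)|) / (p.1 : ℝ) ^ s) *
          (p.2.divisors.card : ℝ) :=
  dedekind_jordan_conv_identity_general s n
end

section
/- For real a and integers s, m with s ≥ 1, the identity ((φ_{s+a}*μ)/id_s) * (1/id_{2ms}) = ((μ*μ)/id_s) * (σ_{a+2ms}/id_{2ms}) holds as arithmetical functions. -/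
open Finset

/-- The Jordan totient with real index `c`: `φ_c = id_c * μ`. -/
noncomputable def jordanPhiR (c : ℝ) (n : ℕ) : ℝ :=
  ∑ p ∈ n.divisorsAntidiagonal, (p.1 : ℝ) ^ c * ((ArithmeticFunction.moebius p.2 : ℤ) : ℝ)

/-- The generalized divisor sum `σ_b = id_b * 1` with real index `b`. -/
noncomputable def sigmaR (b : ℝ) (n : ℕ) : ℝ :=
  ∑ d ∈ n.divisors, (d : ℝ) ^ b

/-!
Since `id_t` is completely multiplicative, `f ↦ f / id_t` is a ring endomorphism of the Dirichlet
ring. Hence `(φ_{s+a} * μ) / id_s = id_a * (μ / id_s) * (μ / id_s)` and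
`σ_{a+2ms} / id_{2ms} = id_a * (1 / id_{2ms})`, so both sides equal
`id_a * (μ / id_s) * (μ / id_s) * (1 / id_{2ms})` by commutativity.
-/

namespace ArithmeticFunction

theorem pdiv_mul_of_map_mul {R : Type*} [Semifield R] {g : ArithmeticFunction R}
    (hg : ∀ m n, g (m * n) = g m * g n) (f₁ f₂ : ArithmeticFunction R) :
    (f₁ * f₂).pdiv g = f₁.pdiv g * f₂.pdiv g := by
  ext n
  simp only [pdiv_apply, mul_apply, sum_div]
  refine sum_congr rfl fun p hp => ?_
  rw [← (Nat.mem_divisorsAntidiagonal.mp hp).1, hg, mul_div_mul_comm]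

/-- `id_t`; the value at `0` must be set by hand, since `(0 : ℝ) ^ (0 : ℝ) = 1`. -/
noncomputable def idRpow (t : ℝ) : ArithmeticFunction ℝ :=
  ⟨fun n => if n = 0 then 0 else (n : ℝ) ^ t, if_pos rfl⟩

theorem idRpow_apply_of_ne_zero (t : ℝ) {n : ℕ} (hn : n ≠ 0) : idRpow t n = (n : ℝ) ^ t :=
  if_neg hn

theorem idRpow_natCast_apply_of_ne_zero (k : ℕ) {n : ℕ} (hn : n ≠ 0) :
    idRpow k n = (n : ℝ) ^ k := by
  rw [idRpow_apply_of_ne_zero _ hn, Real.rpow_natCast]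

theorem idRpow_map_mul (t : ℝ) (m n : ℕ) : idRpow t (m * n) = idRpow t m * idRpow t n := by
  rcases eq_or_ne m 0 with rfl | hm
  · simp
  rcases eq_or_ne n 0 with rfl | hn
  · simp
  rw [idRpow_apply_of_ne_zero _ (mul_ne_zero hm hn), idRpow_apply_of_ne_zero _ hm,
    idRpow_apply_of_ne_zero _ hn, Nat.cast_mul, Real.mul_rpow (Nat.cast_nonneg _) (Nat.cast_nonneg _)]

theorem idRpow_pdiv_idRpow (t u : ℝ) : (idRpow t).pdiv (idRpow u) = idRpow (t - u) := by
  ext n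
  rcases eq_or_ne n 0 with rfl | hn
  · simp
  rw [pdiv_apply, idRpow_apply_of_ne_zero _ hn, idRpow_apply_of_ne_zero _ hn,
    idRpow_apply_of_ne_zero _ hn, Real.rpow_sub (Nat.cast_pos.mpr (Nat.pos_of_ne_zero hn))]

theorem mul_pdiv_idRpow_apply (f g : ArithmeticFunction ℝ) (s k n : ℕ) :
    (f.pdiv (idRpow s) * g.pdiv (idRpow k)) n
      = ∑ p ∈ n.divisorsAntidiagonal, f p.1 / (p.1 : ℝ) ^ s * (g p.2 / (p.2 : ℝ) ^ k) := by
  rw [mul_apply]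
  refine sum_congr rfl fun p hp => ?_
  rw [pdiv_apply, pdiv_apply,
    idRpow_natCast_apply_of_ne_zero _ (Nat.left_ne_zero_of_mem_divisorsAntidiagonal hp),
    idRpow_natCast_apply_of_ne_zero _ (Nat.right_ne_zero_of_mem_divisorsAntidiagonal hp)]

end ArithmeticFunction

open ArithmeticFunction
open scoped ArithmeticFunction.Moebius ArithmeticFunction.zeta

theorem jordanPhiR_eq_idRpow_mul_moebius (c : ℝ) :
    jordanPhiR c = ⇑(idRpow c * (μ : ArithmeticFunction ℝ)) := by
  funext n
  rw [jordanPhiR, mul_apply]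
  refine sum_congr rfl fun p hp => ?_
  rw [idRpow_apply_of_ne_zero _ (Nat.left_ne_zero_of_mem_divisorsAntidiagonal hp), intCoe_apply]

theorem sigmaR_eq_idRpow_mul_zeta (b : ℝ) :
    sigmaR b = ⇑(idRpow b * (ζ : ArithmeticFunction ℝ)) := by
  funext n
  rw [sigmaR, coe_mul_zeta_apply]
  exact sum_congr rfl fun d hd => (idRpow_apply_of_ne_zero _ (Nat.pos_of_mem_divisors hd).ne').symm

theorem phi_sa_conv_identity_general (a : ℝ) (s m : ℕ) (n : ℕ) :
    ∑ p ∈ n.divisorsAntidiagonal,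
        ((∑ q ∈ p.1.divisorsAntidiagonal,
            jordanPhiR ((s : ℝ) + a) q.1 * ((ArithmeticFunction.moebius q.2 : ℤ) : ℝ)) /
          (p.1 : ℝ) ^ s) * (1 / (p.2 : ℝ) ^ (2 * m * s))
    = ∑ p ∈ n.divisorsAntidiagonal,
        ((∑ q ∈ p.1.divisorsAntidiagonal,
            ((ArithmeticFunction.moebius q.1 : ℤ) : ℝ) *
              ((ArithmeticFunction.moebius q.2 : ℤ) : ℝ)) / (p.1 : ℝ) ^ s) *
          (sigmaR (a + 2 * m * s) p.2 / (p.2 : ℝ) ^ (2 * m * s)) := by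
  set k := 2 * m * s
  let μR : ArithmeticFunction ℝ := μ
  let ζR : ArithmeticFunction ℝ := ζ
  calc _ = ((idRpow (s + a) * μR * μR).pdiv (idRpow s) * ζR.pdiv (idRpow k)) n := by
        rw [mul_pdiv_idRpow_apply]
        refine sum_congr rfl fun p hp => ?_
        simp [μR, ζR, mul_apply, jordanPhiR_eq_idRpow_mul_moebius,
          Nat.right_ne_zero_of_mem_divisorsAntidiagonal hp]
    _ = ((μR * μR).pdiv (idRpow s) * (idRpow (a + 2 * m * s) * ζR).pdiv (idRpow k)) n := by
        simp only [pdiv_mul_of_map_mul (idRpow_map_mul _), idRpow_pdiv_idRpow]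
        push_cast [k]
        rw [add_sub_cancel_left, add_sub_cancel_right]
        congr 1
        ring
    _ = _ := by
        rw [mul_pdiv_idRpow_apply]
        simp [μR, ζR, mul_apply, sigmaR_eq_idRpow_mul_zeta]

/-- For real `a` and integers `s, m` with `s ≥ 1`:
`((φ_{s+a}*μ)/id_s) * (1/id_{2ms}) = ((μ*μ)/id_s) * (σ_{a+2ms}/id_{2ms})`. -/
theorem phi_sa_conv_identity (a : ℝ) (s m : ℕ) (hs : 1 ≤ s) (n : ℕ) (hn : 1 ≤ n) :
    ∑ p ∈ n.divisorsAntidiagonal,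
        ((∑ q ∈ p.1.divisorsAntidiagonal,
            jordanPhiR ((s : ℝ) + a) q.1 * ((ArithmeticFunction.moebius q.2 : ℤ) : ℝ)) /
          (p.1 : ℝ) ^ s) * (1 / (p.2 : ℝ) ^ (2 * m * s))
    = ∑ p ∈ n.divisorsAntidiagonal,
        ((∑ q ∈ p.1.divisorsAntidiagonal,
            ((ArithmeticFunction.moebius q.1 : ℤ) : ℝ) *
              ((ArithmeticFunction.moebius q.2 : ℤ) : ℝ)) / (p.1 : ℝ) ^ s) *
          (sigmaR (a + 2 * m * s) p.2 / (p.2 : ℝ) ^ (2 * m * s)) :=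
  phi_sa_conv_identity_general a s m n
end

section
/- For fixed integer s ≥ 2 and x ≥ 1: Σ_{d ≤ x} ((μ*μ)(d)/d^{s+1}) log d = 2 ζ'(s+1)/ζ(s+1)^3 + O_s(x^{−s} (log x)^2). -/
/-!
Write `a = μ * μ`. Since `|a d|` is at most the number of factorisations `d = m * n`, the tail
`∑_{d > y} |a d| log d / d^(s+1)` is dominated by the sum of `log (m n) / (m n)^(s+1)` over the
pairs with `m n > y`. For `m ≤ y` the inner sum runs over `n > y / m` and is
`O(2^s log y / (m y^s))`, and the harmonic sum over `m ≤ y` costs one more factor `log y`; the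
pairs with `m > y` only contribute `O(log y / y^s)`. The complete series is the L-series of
`log · a` at `s + 1`, that is `-(ζ⁻²)'(s + 1) = 2 ζ'(s + 1) / ζ(s + 1)^3`, because the L-series of
`μ * μ` is `ζ⁻²` on `re > 1`.
-/

open Finset Filter Real

/-- The majorant `g u = (log u + c + 2) / u^k` satisfies
`-g' t = (k (log t + c + 2) - 1) / t^(k+1)`; the slack `2` absorbs `log (u + 1) - log t ≤ log 2`
on `[u, u + 1]`. -/
lemma log_add_div_pow_succ_le_sub {k : ℕ} (hk : 1 ≤ k) {c : ℝ} (hc : 0 ≤ c) {u : ℝ}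
    (hu : 1 ≤ u) :
    (log (u + 1) + c) / (u + 1) ^ (k + 1) ≤
      (log u + c + 2) / u ^ k - (log (u + 1) + c + 2) / (u + 1) ^ k := by
  set G : ℝ → ℝ := fun t => (log t + c + 2) / t ^ k
  have hG : ∀ t : ℝ, 0 < t → HasDerivAt G ((1 - k * (log t + c + 2)) / t ^ (k + 1)) t := by
    intro t ht
    obtain ⟨m, rfl⟩ : ∃ m, k = m + 1 := ⟨k - 1, by omega⟩
    refine ((((hasDerivAt_log ht.ne').add_const c).add_const 2).div (hasDerivAt_pow (m + 1) t)
      (pow_ne_zero _ ht.ne')).congr_deriv ?_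
    simp only [add_tsub_cancel_right, Nat.cast_add, Nat.cast_one]
    field_simp
    ring
  obtain ⟨t, ⟨hut, htu⟩, hslope⟩ := exists_hasDerivAt_eq_slope G _ (lt_add_one u)
    (fun t ht => (hG t (by linarith [ht.1])).continuousAt.continuousWithinAt)
    (fun t ht => hG t (by linarith [ht.1]))
  rw [add_sub_cancel_left, div_one] at hslope
  have ht : 0 < t := by linarith
  have hlog : log (u + 1) ≤ log t + 1 := by
    have := log_le_log (by linarith) (show u + 1 ≤ 2 * t by linarith)
    rw [log_mul two_ne_zero ht.ne'] at this
    linarith [log_two_lt_d9]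
  have hlogt : 0 ≤ log t := log_nonneg (by linarith)
  have hk' : (1 : ℝ) ≤ k := by exact_mod_cast hk
  calc (log (u + 1) + c) / (u + 1) ^ (k + 1)
      ≤ (k * (log t + c + 2) - 1) / t ^ (k + 1) :=
        div_le_div₀ (by nlinarith) (by nlinarith) (by positivity)
          (pow_le_pow_left₀ ht.le htu.le _)
    _ = G u - G (u + 1) := by linear_combination -hslope

lemma sum_log_add_div_pow_succ_le {k : ℕ} (hk : 1 ≤ k) {c : ℝ} (hc : 0 ≤ c) {q : ℕ}
    (hq : 1 ≤ q) {A : Finset ℕ} (hA : ∀ n ∈ A, q < n) :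
    ∑ n ∈ A, (log n + c) / (n : ℝ) ^ (k + 1) ≤ (log q + c + 2) / (q : ℝ) ^ k := by
  have htelescope : ∀ M, q ≤ M → ∑ n ∈ Ioc q M, (log n + c) / (n : ℝ) ^ (k + 1) +
      (log M + c + 2) / (M : ℝ) ^ k ≤ (log q + c + 2) / (q : ℝ) ^ k := by
    intro M hM
    induction M, hM using Nat.le_induction with
    | base => simp
    | succ M hM ih =>
      have := log_add_div_pow_succ_le_sub hk hc (Nat.one_le_cast.mpr (hq.trans hM))
      rw [sum_Ioc_succ_top hM]
      push_cast
      linarith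
  set N := max q (A.sup id)
  have hAN : A ⊆ Ioc q N := fun n hn =>
    mem_Ioc.mpr ⟨hA n hn, (le_sup (f := id) hn).trans (le_max_right _ _)⟩
  have hN : 0 ≤ (log N + c + 2) / (N : ℝ) ^ k := by
    have := log_natCast_nonneg N
    positivity
  calc ∑ n ∈ A, (log n + c) / (n : ℝ) ^ (k + 1)
      ≤ ∑ n ∈ Ioc q N, (log n + c) / (n : ℝ) ^ (k + 1) :=
        sum_le_sum_of_subset_of_nonneg hAN fun n _ _ => by
          have := log_natCast_nonneg n
          positivity
    _ ≤ (log q + c + 2) / (q : ℝ) ^ k := by linarith [htelescope N (le_max_left _ _)]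

lemma sum_log_mul_div_mul_pow_le {s : ℕ} (hs : 1 ≤ s) {a q : ℕ} (ha : 1 ≤ a) (hq : 1 ≤ q)
    {B : Finset ℕ} (hB : ∀ b ∈ B, q < b) :
    ∑ b ∈ B, log ((a : ℝ) * b) / ((a : ℝ) * b) ^ (s + 1) ≤
      (log ((a : ℝ) * q) + 2) / (a * ((a : ℝ) * q) ^ s) := by
  have ha0 : (0 : ℝ) < a := by exact_mod_cast ha
  have hq0 : (0 : ℝ) < q := by exact_mod_cast hq
  have hterm : ∀ b ∈ B, log ((a : ℝ) * b) / ((a : ℝ) * b) ^ (s + 1) =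
      (a ^ (s + 1) : ℝ)⁻¹ * ((log b + log a) / (b : ℝ) ^ (s + 1)) := fun b hb => by
    have hb0 : (0 : ℝ) < b := Nat.cast_pos.mpr (by have := hB b hb; omega)
    rw [log_mul ha0.ne' hb0.ne', mul_pow]
    field_simp
    ring
  calc ∑ b ∈ B, log ((a : ℝ) * b) / ((a : ℝ) * b) ^ (s + 1)
      = (a ^ (s + 1) : ℝ)⁻¹ * ∑ b ∈ B, (log b + log a) / (b : ℝ) ^ (s + 1) := by
        rw [sum_congr rfl hterm, mul_sum]
    _ ≤ (a ^ (s + 1) : ℝ)⁻¹ * ((log q + log a + 2) / (q : ℝ) ^ s) := by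
        gcongr
        exact sum_log_add_div_pow_succ_le hs (log_natCast_nonneg a) hq hB
    _ = (log ((a : ℝ) * q) + 2) / (a * ((a : ℝ) * q) ^ s) := by
        rw [log_mul ha0.ne' hq0.ne']
        field_simp
        ring

lemma sum_log_mul_div_mul_pow_le_of_le {s y a : ℕ} (hs : 1 ≤ s) (ha : 1 ≤ a) (hay : a ≤ y)
    {B : Finset ℕ} (hB : ∀ b ∈ B, y < a * b) :
    ∑ b ∈ B, log ((a : ℝ) * b) / ((a : ℝ) * b) ^ (s + 1) ≤
      2 ^ s * (log y + 2) / (a * (y : ℝ) ^ s) := by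
  set q := y / a
  have hq : 1 ≤ q := (Nat.one_le_div_iff (by omega)).mpr hay
  have hqB : ∀ b ∈ B, q < b := fun b hb =>
    (Nat.div_lt_iff_lt_mul (by omega)).mpr (by rw [mul_comm]; exact hB b hb)
  have haq : a * q ≤ y := Nat.mul_div_le y a
  have hy2 : (y : ℝ) / 2 ≤ a * q := by
    have h1 : y < q * a + a := Nat.lt_div_mul_add (show 0 < a by omega)
    have h2 : y ≤ 2 * (a * q) := by nlinarith [Nat.le_mul_of_pos_right a hq]
    rw [div_le_iff₀ two_pos]
    exact_mod_cast h2.trans_eq (mul_comm _ _)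
  have haq1 : (1 : ℝ) ≤ a * q :=
    one_le_mul_of_one_le_of_one_le (Nat.one_le_cast.mpr ha) (Nat.one_le_cast.mpr hq)
  have hy0 : (0 : ℝ) < y := by exact_mod_cast (show 0 < y by omega)
  refine (sum_log_mul_div_mul_pow_le hs ha hq hqB).trans ?_
  calc (log ((a : ℝ) * q) + 2) / (a * ((a : ℝ) * q) ^ s)
      ≤ (log y + 2) / (a * ((y : ℝ) / 2) ^ s) := by
        have : log ((a : ℝ) * q) ≤ log y := log_le_log (by linarith) (by exact_mod_cast haq)
        have : 0 ≤ log ((a : ℝ) * q) := log_nonneg haq1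
        gcongr
    _ = 2 ^ s * (log y + 2) / (a * (y : ℝ) ^ s) := by
        rw [div_pow]
        field_simp

lemma sum_log_mul_div_mul_pow_le_of_one_le {s a : ℕ} (hs : 1 ≤ s) (ha : 1 ≤ a)
    {B : Finset ℕ} (hB : ∀ b ∈ B, 1 ≤ b) :
    ∑ b ∈ B, log ((a : ℝ) * b) / ((a : ℝ) * b) ^ (s + 1) ≤
      2 * (log a + 1) / (a : ℝ) ^ (s + 1) := by
  have hB' : B ⊆ insert 1 (B.filter (1 < ·)) := fun b hb => by
    rcases (hB b hb).eq_or_lt with h | h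
    · exact mem_insert.mpr (.inl h.symm)
    · exact mem_insert_of_mem (mem_filter.mpr ⟨hb, h⟩)
  have hnonneg : ∀ b : ℕ, 1 ≤ b → 0 ≤ log ((a : ℝ) * b) / ((a : ℝ) * b) ^ (s + 1) :=
    fun b hb => by
      have := log_nonneg (one_le_mul_of_one_le_of_one_le (Nat.one_le_cast.mpr ha)
        (Nat.one_le_cast.mpr hb))
      positivity
  have ha0 : (0 : ℝ) < a := by exact_mod_cast ha
  calc ∑ b ∈ B, log ((a : ℝ) * b) / ((a : ℝ) * b) ^ (s + 1)
      ≤ ∑ b ∈ insert 1 (B.filter (1 < ·)), log ((a : ℝ) * b) / ((a : ℝ) * b) ^ (s + 1) :=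
        sum_le_sum_of_subset_of_nonneg hB' fun b hb _ => hnonneg b <| by
          rcases mem_insert.mp hb with rfl | hb
          exacts [le_rfl, (mem_filter.mp hb).2.le]
    _ ≤ log a / (a : ℝ) ^ (s + 1) + (log a + 2) / (a * (a : ℝ) ^ s) := by
        rw [sum_insert (by simp), Nat.cast_one, mul_one]
        gcongr
        simpa only [Nat.cast_one, mul_one] using
          sum_log_mul_div_mul_pow_le hs ha le_rfl fun b hb => (mem_filter.mp hb).2
    _ = 2 * (log a + 1) / (a : ℝ) ^ (s + 1) := by
        field_simp
        ring

lemma sum_sum_log_mul_div_mul_pow_le_of_le {s y : ℕ} (hs : 1 ≤ s) (hy : 1 ≤ y)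
    {S : Finset ℕ} {T : ℕ → Finset ℕ} (hS : ∀ a ∈ S, 1 ≤ a ∧ a ≤ y)
    (hT : ∀ a ∈ S, ∀ b ∈ T a, y < a * b) :
    ∑ a ∈ S, ∑ b ∈ T a, log ((a : ℝ) * b) / ((a : ℝ) * b) ^ (s + 1) ≤
      2 ^ s * (log y + 2) * (1 + log y) / (y : ℝ) ^ s := by
  have hL : 0 ≤ log y := log_natCast_nonneg y
  have hharmonic : ∑ a ∈ S, (a : ℝ)⁻¹ ≤ 1 + log y := by
    calc ∑ a ∈ S, (a : ℝ)⁻¹ ≤ ∑ a ∈ Icc 1 y, (a : ℝ)⁻¹ :=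
          sum_le_sum_of_subset_of_nonneg (fun a ha => mem_Icc.mpr (hS a ha))
            fun _ _ _ => by positivity
      _ ≤ 1 + log y := by
          simpa [harmonic_eq_sum_Icc] using harmonic_le_one_add_log y
  calc ∑ a ∈ S, ∑ b ∈ T a, log ((a : ℝ) * b) / ((a : ℝ) * b) ^ (s + 1)
      ≤ ∑ a ∈ S, 2 ^ s * (log y + 2) / (y : ℝ) ^ s * (a : ℝ)⁻¹ := by
        refine sum_le_sum fun a ha => ?_
        refine (sum_log_mul_div_mul_pow_le_of_le hs (hS a ha).1 (hS a ha).2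
          (hT a ha)).trans_eq ?_
        ring
    _ ≤ 2 ^ s * (log y + 2) / (y : ℝ) ^ s * (1 + log y) := by
        rw [← mul_sum]
        gcongr
    _ = 2 ^ s * (log y + 2) * (1 + log y) / (y : ℝ) ^ s := div_mul_eq_mul_div _ _ _

lemma sum_sum_log_mul_div_mul_pow_le_of_lt {s y : ℕ} (hs : 1 ≤ s) (hy : 1 ≤ y)
    {S : Finset ℕ} {T : ℕ → Finset ℕ} (hS : ∀ a ∈ S, y < a)
    (hT : ∀ a ∈ S, ∀ b ∈ T a, 1 ≤ b) :
    ∑ a ∈ S, ∑ b ∈ T a, log ((a : ℝ) * b) / ((a : ℝ) * b) ^ (s + 1) ≤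
      2 * (log y + 3) / (y : ℝ) ^ s := by
  calc ∑ a ∈ S, ∑ b ∈ T a, log ((a : ℝ) * b) / ((a : ℝ) * b) ^ (s + 1)
      ≤ ∑ a ∈ S, 2 * ((log a + 1) / (a : ℝ) ^ (s + 1)) := by
        refine sum_le_sum fun a ha => ?_
        rw [← mul_div_assoc]
        exact sum_log_mul_div_mul_pow_le_of_one_le hs (by linarith [hS a ha]) (hT a ha)
    _ ≤ 2 * ((log y + 1 + 2) / (y : ℝ) ^ s) := by
        rw [← mul_sum]
        gcongr
        exact sum_log_add_div_pow_succ_le hs zero_le_one hy hS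
    _ = 2 * (log y + 3) / (y : ℝ) ^ s := by ring

lemma sum_sum_divisorsAntidiagonal_eq {M : Type*} [AddCommMonoid M] (A : Finset ℕ)
    (φ : ℕ × ℕ → M) :
    ∑ d ∈ A, ∑ p ∈ d.divisorsAntidiagonal, φ p =
      ∑ a ∈ Ioc 0 (A.sup id), ∑ b ∈ (Ioc 0 (A.sup id)).filter (a * · ∈ A), φ (a, b) := by
  have hdisj : (A : Set ℕ).PairwiseDisjoint Nat.divisorsAntidiagonal :=
    fun d₁ _ d₂ _ hne => disjoint_left.mpr fun p h₁ h₂ =>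
      hne ((Nat.mem_divisorsAntidiagonal.mp h₁).1.symm.trans
        (Nat.mem_divisorsAntidiagonal.mp h₂).1)
  rw [← sum_biUnion hdisj]
  refine sum_finset_product _ _ _ fun p => ?_
  simp only [mem_biUnion, Nat.mem_divisorsAntidiagonal, mem_Ioc, mem_filter]
  constructor
  · rintro ⟨d, hd, rfl, hd0⟩
    have hdN : p.1 * p.2 ≤ A.sup id := le_sup (f := id) hd
    have h₁ := Nat.pos_of_ne_zero (left_ne_zero_of_mul hd0)
    have h₂ := Nat.pos_of_ne_zero (right_ne_zero_of_mul hd0)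
    exact ⟨⟨h₁, (Nat.le_mul_of_pos_right _ h₂).trans hdN⟩,
      ⟨h₂, (Nat.le_mul_of_pos_left _ h₁).trans hdN⟩, hd⟩
  · rintro ⟨⟨h₁, -⟩, ⟨h₂, -⟩, hd⟩
    exact ⟨_, hd, rfl, (Nat.mul_pos h₁ h₂).ne'⟩

lemma sum_card_divisorsAntidiagonal_mul_log_div_pow_le {s y : ℕ} (hs : 1 ≤ s) (hy : 1 ≤ y)
    {A : Finset ℕ} (hA : ∀ d ∈ A, y < d) :
    ∑ d ∈ A, #d.divisorsAntidiagonal * (log d / (d : ℝ) ^ (s + 1)) ≤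
      2 ^ (s + 1) * (log y + 2) ^ 2 / (y : ℝ) ^ s := by
  have hfactor : ∀ d ∈ A, #d.divisorsAntidiagonal * (log d / (d : ℝ) ^ (s + 1)) =
      ∑ p ∈ d.divisorsAntidiagonal, log ((p.1 : ℝ) * p.2) / ((p.1 : ℝ) * p.2) ^ (s + 1) :=
    fun d _ => by
      rw [← nsmul_eq_mul, ← sum_const]
      refine sum_congr rfl fun p hp => ?_
      rw [← (Nat.mem_divisorsAntidiagonal.mp hp).1, Nat.cast_mul]
  rw [sum_congr rfl hfactor, sum_sum_divisorsAntidiagonal_eq,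
    ← sum_filter_add_sum_filter_not _ (· ≤ y)]
  refine (add_le_add
    (sum_sum_log_mul_div_mul_pow_le_of_le hs hy
      (fun a ha => by simp only [mem_filter, mem_Ioc] at ha; omega)
      fun a _ b hb => hA _ (mem_filter.mp hb).2)
    (sum_sum_log_mul_div_mul_pow_le_of_lt hs hy
      (fun a ha => by simp only [mem_filter, mem_Ioc] at ha; omega)
      fun a _ b hb => (mem_Ioc.mp (mem_filter.mp hb).1).1)).trans ?_
  rw [← add_div]
  gcongr
  have hL : 0 ≤ log y := log_natCast_nonneg y
  have h2s : (2 : ℝ) ≤ 2 ^ s := by simpa using pow_le_pow_right₀ one_le_two hs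
  rw [pow_succ]
  nlinarith [mul_nonneg (sub_nonneg.mpr h2s) (sq_nonneg (log y + 2))]

lemma abs_sum_divisorsAntidiagonal_mul_le_card {f g : ℕ → ℝ} (hf : ∀ n, |f n| ≤ 1)
    (hg : ∀ n, |g n| ≤ 1) (d : ℕ) :
    |∑ p ∈ d.divisorsAntidiagonal, f p.1 * g p.2| ≤ #d.divisorsAntidiagonal := by
  calc |∑ p ∈ d.divisorsAntidiagonal, f p.1 * g p.2|
      ≤ ∑ p ∈ d.divisorsAntidiagonal, |f p.1 * g p.2| := abs_sum_le_sum_abs _ _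
    _ ≤ #d.divisorsAntidiagonal • (1 : ℝ) := sum_le_card_nsmul _ _ _ fun p _ => by
        rw [abs_mul]
        exact mul_le_one₀ (hf _) (abs_nonneg _) (hg _)
    _ = #d.divisorsAntidiagonal := nsmul_one _

lemma sum_norm_convolution_div_pow_mul_log_le {f g : ℕ → ℝ} (hf : ∀ n, |f n| ≤ 1)
    (hg : ∀ n, |g n| ≤ 1) {s y : ℕ} (hs : 1 ≤ s) (hy : 1 ≤ y) {A : Finset ℕ}
    (hA : ∀ d ∈ A, y < d) :
    ∑ d ∈ A, ‖(∑ p ∈ d.divisorsAntidiagonal, f p.1 * g p.2) / (d : ℝ) ^ (s + 1) * log d‖ ≤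
      2 ^ (s + 1) * (log y + 2) ^ 2 / (y : ℝ) ^ s := by
  refine le_trans (sum_le_sum fun d _ => ?_)
    (sum_card_divisorsAntidiagonal_mul_log_div_pow_le hs hy hA)
  rw [norm_mul, norm_div, norm_pow, Real.norm_natCast, Real.norm_eq_abs, Real.norm_eq_abs,
    abs_of_nonneg (log_natCast_nonneg d), div_mul_eq_mul_div, mul_div_assoc]
  gcongr
  exact abs_sum_divisorsAntidiagonal_mul_le_card hf hg d

lemma norm_sum_range_sub_tsum_le {f : ℕ → ℝ} {k : ℕ} {c : ℝ}
    (h : ∀ A : Finset ℕ, (∀ n ∈ A, k ≤ n) → ∑ n ∈ A, ‖f n‖ ≤ c) :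
    ‖∑ n ∈ range k, f n - ∑' n, f n‖ ≤ c := by
  have htail : ∀ u : Finset ℕ, ∑ i ∈ u, ‖f (i + k)‖ ≤ c := fun u => by
    simpa using h (u.map (addRightEmbedding k)) (by simp)
  have hg : Summable fun i => ‖f (i + k)‖ := summable_of_sum_le (fun _ => norm_nonneg _) htail
  rw [← ((summable_nat_add_iff k).mp hg.of_norm).sum_add_tsum_nat_add k, sub_add_cancel_left,
    norm_neg]
  exact (norm_tsum_le_tsum_norm hg).trans (Real.tsum_le_of_sum_le (fun _ => norm_nonneg _) htail)

section LSeries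

open ArithmeticFunction ArithmeticFunction.Moebius LSeries LSeries.notation

lemma LSeries_moebius_convolution_moebius {z : ℂ} (hz : 1 < z.re) :
    L (↗μ ⍟ ↗μ) z = (riemannZeta z ^ 2)⁻¹ := by
  have hμ : LSeriesSummable ↗μ z := LSeriesSummable_moebius_iff.mpr hz
  have hζμ := LSeries_zeta_mul_Lseries_moebius hz
  rw [LSeries_zeta_eq_riemannZeta hz] at hζμ
  rw [LSeries_convolution' hμ hμ, eq_inv_of_mul_eq_one_right hζμ, sq, mul_inv]

lemma LSeries_logMul_moebius_convolution_moebius {z : ℂ} (hz : 1 < z.re) :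
    L (logMul (↗μ ⍟ ↗μ)) z = 2 * deriv riemannZeta z / riemannZeta z ^ 3 := by
  have habs : abscissaOfAbsConv (↗μ ⍟ ↗μ) < z.re := by
    refine (abscissaOfAbsConv_convolution_le _ _).trans_lt ?_
    rwa [abscissaOfAbsConv_moebius, max_self, ← EReal.coe_one, EReal.coe_lt_coe_iff]
  have hev : L (↗μ ⍟ ↗μ) =ᶠ[nhds z] fun w => (riemannZeta w ^ 2)⁻¹ :=
    eventuallyEq_iff_exists_mem.mpr ⟨{w | 1 < w.re},
      (isOpen_lt continuous_const Complex.continuous_re).mem_nhds hz,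
      fun _ => LSeries_moebius_convolution_moebius⟩
  have hζ : riemannZeta z ≠ 0 := riemannZeta_ne_zero_of_one_lt_re hz
  have hζ' : HasDerivAt riemannZeta (deriv riemannZeta z) z :=
    (differentiableAt_riemannZeta fun h => by simp [h] at hz).hasDerivAt
  have hinv : HasDerivAt (fun w => (riemannZeta w ^ 2)⁻¹) _ z :=
    (hζ'.pow 2).inv (pow_ne_zero 2 hζ)
  rw [← neg_neg (L _ z), ← LSeries_deriv habs, hev.deriv_eq, hinv.deriv, Pi.pow_apply]
  field_simp
  ring

lemma LSeries_logMul_ofReal_natCast (f : ℕ → ℝ) (k : ℕ) :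
    L (logMul fun n => (f n : ℂ)) k = ((∑' n, f n / (n : ℝ) ^ k * Real.log n : ℝ) : ℂ) := by
  rw [Complex.ofReal_tsum, LSeries]
  refine tsum_congr fun n => ?_
  rcases eq_or_ne n 0 with rfl | hn
  · simp
  rw [term_of_ne_zero hn, logMul, Complex.cpow_natCast, ← Complex.natCast_log]
  push_cast
  ring

lemma ofReal_tsum_moebius_convolution_div_pow_mul_log {k : ℕ} (hk : 1 < k) :
    ((∑' d : ℕ, (∑ q ∈ d.divisorsAntidiagonal, ((μ q.1 : ℤ) : ℝ) * ((μ q.2 : ℤ) : ℝ)) /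
      (d : ℝ) ^ k * Real.log d : ℝ) : ℂ) = 2 * deriv riemannZeta k / riemannZeta k ^ 3 := by
  rw [← LSeries_logMul_moebius_convolution_moebius (by simpa using hk),
    ← LSeries_logMul_ofReal_natCast, convolution_def]
  push_cast
  rfl

end LSeries

lemma isBigO_log_natFloor_add_two_sq_div_pow (s : ℕ) :
    (fun x : ℝ => (log ⌊x⌋₊ + 2) ^ 2 / (⌊x⌋₊ : ℝ) ^ s) =O[atTop]
      fun x : ℝ => x ^ (-(s : ℝ)) * log x ^ 2 := by
  refine Asymptotics.IsBigO.of_bound (9 * 2 ^ s) ?_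
  filter_upwards [eventually_ge_atTop (3 : ℝ)] with x hx
  have hx0 : 0 < x := by linarith
  have hy : (1 : ℝ) ≤ ⌊x⌋₊ := by exact_mod_cast (Nat.one_le_floor_iff x).mpr (by linarith)
  have hxy : x / 2 ≤ ⌊x⌋₊ := by linarith [Nat.lt_floor_add_one x]
  have hlogx : 1 ≤ log x := by
    rw [le_log_iff_exp_le hx0]
    linarith [exp_one_lt_d9]
  have hlogy : 0 ≤ log ⌊x⌋₊ := log_natCast_nonneg _
  have hlogyx : log ⌊x⌋₊ ≤ log x := log_le_log (by linarith) (Nat.floor_le hx0.le)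
  rw [Real.norm_of_nonneg (by positivity), Real.norm_of_nonneg (by positivity), rpow_neg hx0.le,
    rpow_natCast]
  calc (log ⌊x⌋₊ + 2) ^ 2 / (⌊x⌋₊ : ℝ) ^ s
      ≤ (3 * log x) ^ 2 / (x / 2) ^ s := by
        gcongr
        linarith
    _ = 9 * 2 ^ s * ((x ^ s)⁻¹ * log x ^ 2) := by
        rw [div_pow]
        field_simp
        ring

/-- For fixed `s ≥ 2`, as `x → ∞`:
`∑_{d ≤ x} ((μ*μ)(d)/d^{s+1}) log d = 2 ζ'(s+1)/ζ(s+1)^3 + O_s(x^{−s} (log x)^2)`. -/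
theorem moebius_sq_conv_log_partial_sum (s : ℕ) (hs : 2 ≤ s) :
    (fun x : ℝ =>
        ((∑ d ∈ Finset.Icc 1 ⌊x⌋₊,
            (∑ q ∈ d.divisorsAntidiagonal,
              ((ArithmeticFunction.moebius q.1 : ℤ) : ℝ) *
                ((ArithmeticFunction.moebius q.2 : ℤ) : ℝ)) / (d : ℝ) ^ (s + 1) *
              Real.log d : ℝ) : ℂ)
          - 2 * deriv riemannZeta ((s : ℂ) + 1) / riemannZeta ((s : ℂ) + 1) ^ 3)
      =O[atTop] fun x : ℝ => x ^ (-(s : ℝ)) * Real.log x ^ 2 := by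
  set F : ℕ → ℝ := fun d => (∑ q ∈ d.divisorsAntidiagonal,
    ((ArithmeticFunction.moebius q.1 : ℤ) : ℝ) * ((ArithmeticFunction.moebius q.2 : ℤ) : ℝ)) /
      (d : ℝ) ^ (s + 1) * log d
  have hμ : ∀ n, |((ArithmeticFunction.moebius n : ℤ) : ℝ)| ≤ 1 := fun n => by
    exact_mod_cast ArithmeticFunction.abs_moebius_le_one
  have hsum : ((∑' d, F d : ℝ) : ℂ) =
      2 * deriv riemannZeta ((s : ℂ) + 1) / riemannZeta ((s : ℂ) + 1) ^ 3 := by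
    simpa using ofReal_tsum_moebius_convolution_div_pow_mul_log (k := s + 1) (by omega)
  have hpartial : ∀ y : ℕ, ∑ d ∈ Icc 1 y, F d = ∑ d ∈ range (y + 1), F d :=
    fun y => sum_subset (fun d hd => by simp only [mem_Icc, mem_range] at hd ⊢; omega)
      fun d hd hd' => by
        obtain rfl : d = 0 := by simp only [mem_range, mem_Icc, not_and, not_le] at hd hd'; omega
        simp [F]
  refine Asymptotics.IsBigO.trans ?_ (isBigO_log_natFloor_add_two_sq_div_pow s)
  refine Asymptotics.IsBigO.of_bound (2 ^ (s + 1)) ?_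
  filter_upwards [eventually_ge_atTop (1 : ℝ)] with x hx
  rw [hpartial, ← hsum, ← Complex.ofReal_sub, Complex.norm_real,
    Real.norm_of_nonneg (by positivity : (0 : ℝ) ≤ (log ⌊x⌋₊ + 2) ^ 2 / (⌊x⌋₊ : ℝ) ^ s),
    ← mul_div_assoc]
  exact norm_sum_range_sub_tsum_le fun A hA => sum_norm_convolution_div_pow_mul_log_le hμ hμ
    (by omega) ((Nat.one_le_floor_iff x).mpr hx) hA
end

section
/- For fixed integer s ≥ 2 and x ≥ 1: Σ_{d ≤ x} (μ*|μ|)(d)/d^{s+1} = 1/ζ(2s+2) + O_s(x^{−s} log x). -/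
/-! Both `μ * |μ|` and `n ↦ μ(√n)·[n is a square]` are multiplicative and take the values
`1, 0, -1, 0, 0, …` at `p ^ 0, p ^ 1, p ^ 2, …`, so they coincide. The partial sum up to `x` is
therefore the partial sum up to `√x` of the Dirichlet series `∑ μ(m) / m ^ (2s+2) = 1 / ζ(2s+2)`,
whose tail beyond `√x` is at most `(π² / 6) · x ^ (-s)`. -/

open Finset Filter
open scoped ArithmeticFunction.Moebius

theorem Nat.Prime.isSquare_pow_iff {p : ℕ} (hp : p.Prime) {k : ℕ} :
    IsSquare (p ^ k) ↔ Even k := by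
  refine ⟨fun ⟨c, hc⟩ => ?_, fun ⟨j, hj⟩ => ⟨p ^ j, by rw [hj, pow_add]⟩⟩
  have hc0 : c ≠ 0 := by
    rintro rfl
    exact pow_ne_zero k hp.ne_zero (by simpa using hc)
  have := congrArg (·.factorization p) hc
  simp only [hp.factorization_pow, Finsupp.single_eq_same, Nat.factorization_mul hc0 hc0,
    Finsupp.add_apply] at this
  exact ⟨_, this⟩

theorem Nat.Coprime.isSquare_mul_iff {m n : ℕ} (h : m.Coprime n) :
    IsSquare (m * n) ↔ IsSquare m ∧ IsSquare n := by
  refine ⟨fun ⟨c, hc⟩ => ?_, fun ⟨hm, hn⟩ => hm.mul hn⟩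
  have hu : IsUnit (gcd m n) := Nat.isUnit_iff.mpr h
  rw [← sq] at hc
  obtain ⟨a, rfl⟩ := exists_eq_pow_of_mul_eq_pow hu hc
  obtain ⟨b, hb⟩ :=
    exists_eq_pow_of_mul_eq_pow (gcd_comm (a ^ 2) n ▸ hu) (mul_comm (a ^ 2) n ▸ hc)
  exact ⟨IsSquare.sq a, hb ▸ IsSquare.sq b⟩

theorem Finset.sum_Icc_one_eq_sum_range_sqrt_mul_self {M : Type*} [AddCommMonoid M]
    {G : ℕ → M} (hG : ∀ d, ¬IsSquare d → G d = 0) (h0 : G 0 = 0) (N : ℕ) :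
    ∑ d ∈ Icc 1 N, G d = ∑ m ∈ range (N.sqrt + 1), G (m * m) := by
  have mem_squares {d : ℕ} :
      d ∈ (range (N.sqrt + 1)).image (fun m => m * m) ↔ IsSquare d ∧ d ≤ N := by
    simp only [mem_image, mem_range, Nat.lt_succ_iff, Nat.le_sqrt]
    refine ⟨fun ⟨m, hm, hd⟩ => ⟨⟨m, hd.symm⟩, hd ▸ hm⟩, fun ⟨⟨m, hm⟩, hd⟩ => ⟨m, ?_⟩⟩
    rw [← hm]
    exact ⟨hd, rfl⟩
  calc ∑ d ∈ Icc 1 N, G d = ∑ d ∈ range (N + 1), G d := by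
        refine sum_subset (fun d hd => ?_) fun d _ hd => ?_
        · simp only [mem_Icc, mem_range] at hd ⊢; omega
        · obtain rfl : d = 0 := by simp only [mem_Icc, mem_range] at *; omega
          exact h0
    _ = ∑ d ∈ (range (N.sqrt + 1)).image (fun m => m * m), G d := by
        refine (sum_subset (fun d hd => ?_) fun d hdN hd => hG d fun hsq => hd ?_).symm
        · exact mem_range.mpr (Nat.lt_succ_of_le (mem_squares.mp hd).2)
        · exact mem_squares.mpr ⟨hsq, Nat.lt_succ_iff.mp (mem_range.mp hdN)⟩
    _ = ∑ m ∈ range (N.sqrt + 1), G (m * m) :=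
        sum_image fun a _ b _ hab => Nat.mul_self_inj.mp hab

theorem lt_sq_sqrt_floor_add_one (x : ℝ) : x < ((⌊x⌋₊.sqrt + 1 : ℕ) : ℝ) ^ 2 :=
  calc x < ⌊x⌋₊ + 1 := Nat.lt_floor_add_one x
    _ ≤ ((⌊x⌋₊.sqrt + 1 : ℕ) : ℝ) ^ 2 := by exact_mod_cast Nat.lt_succ_sqrt' ⌊x⌋₊

theorem Asymptotics.isBigO_self_mul_log (f : ℝ → ℝ) :
    f =O[atTop] fun x => f x * Real.log x := by
  simpa using (isBigO_refl f atTop).mul (Real.isLittleO_const_log_atTop (c := 1)).isBigO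

namespace ArithmeticFunction

variable {R : Type*}

section Abs

variable [Ring R] [LinearOrder R] [IsOrderedRing R]

def abs (f : ArithmeticFunction R) : ArithmeticFunction R :=
  ⟨fun n => |f n|, by simp⟩

@[simp]
theorem abs_apply (f : ArithmeticFunction R) (n : ℕ) : f.abs n = |f n| := rfl

theorem IsMultiplicative.abs {f : ArithmeticFunction R} (hf : f.IsMultiplicative) :
    f.abs.IsMultiplicative :=
  ⟨by simp [hf.map_one], fun h => by simp [hf.map_mul_of_coprime h, abs_mul]⟩

end Abs

def onSquares [Zero R] (f : ArithmeticFunction R) : ArithmeticFunction R :=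
  ⟨fun n => if IsSquare n then f n.sqrt else 0, by simp⟩

theorem onSquares_apply [Zero R] (f : ArithmeticFunction R) (n : ℕ) :
    f.onSquares n = if IsSquare n then f n.sqrt else 0 := rfl

theorem onSquares_apply_mul_self [Zero R] (f : ArithmeticFunction R) (m : ℕ) :
    f.onSquares (m * m) = f m := by
  rw [onSquares_apply, if_pos ⟨m, rfl⟩, Nat.sqrt_eq]

theorem IsMultiplicative.onSquares [MonoidWithZero R] {f : ArithmeticFunction R}
    (hf : f.IsMultiplicative) : f.onSquares.IsMultiplicative := by
  refine ⟨by rw [← mul_one 1, onSquares_apply_mul_self, hf.map_one], fun {m n} h => ?_⟩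
  by_cases hmn : IsSquare m ∧ IsSquare n
  · obtain ⟨⟨a, rfl⟩, ⟨b, rfl⟩⟩ := hmn
    have hab : a.Coprime b :=
      (h.coprime_dvd_left (dvd_mul_left a a)).coprime_dvd_right (dvd_mul_left b b)
    rw [mul_mul_mul_comm, onSquares_apply_mul_self, onSquares_apply_mul_self,
      onSquares_apply_mul_self, hf.map_mul_of_coprime hab]
  · rw [onSquares_apply, if_neg (h.isSquare_mul_iff.not.mpr hmn)]
    rcases not_and_or.mp hmn with hm | hn
    · rw [onSquares_apply f m, if_neg hm, zero_mul]
    · rw [onSquares_apply f n, if_neg hn, mul_zero]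

theorem moebius_apply_prime_pow_eq_ite {p : ℕ} (hp : p.Prime) (k : ℕ) :
    μ (p ^ k) = if k = 0 then 1 else if k = 1 then -1 else 0 := by
  rcases eq_or_ne k 0 with rfl | hk
  · simp
  · rw [moebius_apply_prime_pow hp hk, if_neg hk]

theorem onSquares_moebius_apply_prime_pow {p : ℕ} (hp : p.Prime) (k : ℕ) :
    moebius.onSquares (p ^ k) = if k = 0 then 1 else if k = 2 then -1 else 0 := by
  rcases Nat.even_or_odd' k with ⟨j, rfl | rfl⟩
  · rw [two_mul, pow_add, onSquares_apply_mul_self, moebius_apply_prime_pow_eq_ite hp]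
    omega
  · rw [onSquares_apply, if_neg (hp.isSquare_pow_iff.not.mpr (Nat.not_even_two_mul_add_one j))]
    omega

theorem moebius_mul_abs_moebius_apply_prime_pow {p : ℕ} (hp : p.Prime) (k : ℕ) :
    (μ * moebius.abs) (p ^ k) = if k = 0 then 1 else if k = 2 then -1 else 0 := by
  rw [mul_apply, Nat.sum_divisorsAntidiagonal (fun a b => μ a * moebius.abs b),
    Nat.sum_divisors_prime_pow hp, sum_congr rfl fun j hj => by
      rw [abs_apply, Nat.pow_div (Nat.lt_succ_iff.mp (mem_range.mp hj)) hp.pos]]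
  rcases k with _ | _ | _ | k <;> simp [sum_range_succ', moebius_apply_prime_pow_eq_ite hp]

theorem moebius_mul_abs_moebius : μ * moebius.abs = moebius.onSquares :=
  (IsMultiplicative.eq_iff_eq_on_prime_powers _
    (isMultiplicative_moebius.mul isMultiplicative_moebius.abs) _
    isMultiplicative_moebius.onSquares).mpr fun p k hp => by
      rw [moebius_mul_abs_moebius_apply_prime_pow hp, onSquares_moebius_apply_prime_pow hp]

theorem LSeriesHasSum_moebius {s : ℂ} (hs : 1 < s.re) :
    LSeriesHasSum (fun n => (μ n : ℂ)) s (riemannZeta s)⁻¹ := by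
  rw [← LSeries_zeta_eq_riemannZeta hs,
    ← eq_inv_of_mul_eq_one_right (LSeries_zeta_mul_Lseries_moebius hs)]
  exact (LSeriesSummable_moebius_iff.mpr hs).LSeriesHasSum

theorem hasSum_moebius_div_pow {k : ℕ} (hk : 1 < k) :
    HasSum (fun n : ℕ => (μ n : ℂ) / (n : ℂ) ^ k) (riemannZeta k)⁻¹ := by
  refine (LSeriesHasSum_moebius (s := k) (by simpa using hk)).congr_fun fun n => ?_
  rcases eq_or_ne n 0 with rfl | hn
  · simp
  · rw [LSeries.term_of_ne_zero hn, Complex.cpow_natCast]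

theorem norm_tsum_moebius_div_pow_nat_add_le (k : ℕ) {K : ℕ} (hK : K ≠ 0) :
    ‖∑' n : ℕ, (μ (n + K) : ℂ) / ((n + K : ℕ) : ℂ) ^ (k + 2)‖ ≤ Real.pi ^ 2 / 6 / K ^ k := by
  have hsq : Summable fun n : ℕ => 1 / ((n + K : ℕ) : ℝ) ^ 2 :=
    (summable_nat_add_iff K).mpr hasSum_zeta_two.summable
  have hterm (n : ℕ) : ‖(μ (n + K) : ℂ) / ((n + K : ℕ) : ℂ) ^ (k + 2)‖
      ≤ 1 / (K : ℝ) ^ k * (1 / ((n + K : ℕ) : ℝ) ^ 2) := by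
    have hKn : (K : ℝ) ≤ ((n + K : ℕ) : ℝ) := by exact_mod_cast Nat.le_add_left K n
    have hK0 : (0 : ℝ) < K := by exact_mod_cast Nat.pos_of_ne_zero hK
    rw [norm_div, norm_pow, Complex.norm_natCast, Complex.norm_intCast, pow_add,
      div_mul_div_comm, one_mul]
    gcongr
    exact_mod_cast abs_moebius_le_one
  calc ‖∑' n : ℕ, (μ (n + K) : ℂ) / ((n + K : ℕ) : ℂ) ^ (k + 2)‖
      ≤ ∑' n : ℕ, 1 / (K : ℝ) ^ k * (1 / ((n + K : ℕ) : ℝ) ^ 2) :=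
        tsum_of_norm_bounded (hsq.mul_left _).hasSum hterm
    _ = 1 / (K : ℝ) ^ k * ∑' n : ℕ, 1 / ((n + K : ℕ) : ℝ) ^ 2 := tsum_mul_left
    _ ≤ 1 / (K : ℝ) ^ k * (Real.pi ^ 2 / 6) := by
        gcongr
        rw [← hasSum_zeta_two.tsum_eq]
        exact tsum_comp_le_tsum_of_inj hasSum_zeta_two.summable (fun n => by positivity)
          (add_left_injective K)
    _ = Real.pi ^ 2 / 6 / K ^ k := by ring

theorem sum_Icc_moebius_mul_abs_moebius_div_pow (s N : ℕ) :
    ((∑ d ∈ Icc 1 N, (∑ q ∈ d.divisorsAntidiagonal,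
        ((μ q.1 : ℤ) : ℝ) * |((μ q.2 : ℤ) : ℝ)|) / (d : ℝ) ^ (s + 1) : ℝ) : ℂ)
      = ∑ m ∈ range (N.sqrt + 1), (μ m : ℂ) / (m : ℂ) ^ (2 * s + 2) := by
  have hconv (d : ℕ) : ∑ q ∈ d.divisorsAntidiagonal, ((μ q.1 : ℤ) : ℝ) * |((μ q.2 : ℤ) : ℝ)|
      = ((moebius.onSquares d : ℤ) : ℝ) := by
    simp only [← moebius_mul_abs_moebius, mul_apply, abs_apply, Int.cast_sum, Int.cast_mul,
      Int.cast_abs]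
  simp only [hconv]
  push_cast
  rw [sum_Icc_one_eq_sum_range_sqrt_mul_self
    (fun d hd => by rw [onSquares_apply, if_neg hd, Int.cast_zero, zero_div]) (by simp)]
  refine sum_congr rfl fun m _ => ?_
  rw [onSquares_apply_mul_self]
  push_cast
  ring

theorem norm_sum_Icc_moebius_mul_abs_moebius_div_pow_sub_le (s N : ℕ) :
    ‖((∑ d ∈ Icc 1 N, (∑ q ∈ d.divisorsAntidiagonal,
        ((μ q.1 : ℤ) : ℝ) * |((μ q.2 : ℤ) : ℝ)|) / (d : ℝ) ^ (s + 1) : ℝ) : ℂ)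
      - 1 / riemannZeta (2 * (s : ℂ) + 2)‖
      ≤ Real.pi ^ 2 / 6 / ((N.sqrt + 1 : ℕ) : ℝ) ^ (2 * s) := by
  have hζ := hasSum_moebius_div_pow (k := 2 * s + 2) (by omega)
  rw [sum_Icc_moebius_mul_abs_moebius_div_pow, one_div,
    show 2 * (s : ℂ) + 2 = ((2 * s + 2 : ℕ) : ℂ) by push_cast; ring, ← hζ.tsum_eq,
    ← hζ.summable.sum_add_tsum_nat_add, sub_add_cancel_left, norm_neg]
  exact norm_tsum_moebius_div_pow_nat_add_le (2 * s) (Nat.add_one_ne_zero _)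

end ArithmeticFunction

theorem moebius_sqfree_conv_partial_sum_general (s : ℕ) :
    (fun x : ℝ =>
        ((∑ d ∈ Finset.Icc 1 ⌊x⌋₊,
            (∑ q ∈ d.divisorsAntidiagonal,
              ((ArithmeticFunction.moebius q.1 : ℤ) : ℝ) *
                |((ArithmeticFunction.moebius q.2 : ℤ) : ℝ)|) / (d : ℝ) ^ (s + 1) : ℝ) : ℂ)
          - 1 / riemannZeta (2 * (s : ℂ) + 2))
      =O[atTop] fun x : ℝ => x ^ (-(s : ℝ)) * Real.log x := by
  refine (Asymptotics.IsBigO.of_bound (Real.pi ^ 2 / 6) ?_).trans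
    (Asymptotics.isBigO_self_mul_log _)
  filter_upwards [eventually_gt_atTop 0] with x hx
  refine (ArithmeticFunction.norm_sum_Icc_moebius_mul_abs_moebius_div_pow_sub_le s ⌊x⌋₊).trans ?_
  rw [Real.norm_of_nonneg (by positivity), Real.rpow_neg hx.le, Real.rpow_natCast,
    div_eq_mul_inv, pow_mul]
  gcongr
  exact (lt_sq_sqrt_floor_add_one x).le

/-- For fixed `s ≥ 2`, as `x → ∞`:
`∑_{d ≤ x} (μ*|μ|)(d)/d^{s+1} = 1/ζ(2s+2) + O_s(x^{−s} log x)`. -/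
theorem moebius_sqfree_conv_partial_sum (s : ℕ) (hs : 2 ≤ s) :
    (fun x : ℝ =>
        ((∑ d ∈ Finset.Icc 1 ⌊x⌋₊,
            (∑ q ∈ d.divisorsAntidiagonal,
              ((ArithmeticFunction.moebius q.1 : ℤ) : ℝ) *
                |((ArithmeticFunction.moebius q.2 : ℤ) : ℝ)|) / (d : ℝ) ^ (s + 1) : ℝ) : ℂ)
          - 1 / riemannZeta (2 * (s : ℂ) + 2))
      =O[atTop] fun x : ℝ => x ^ (-(s : ℝ)) * Real.log x :=
  moebius_sqfree_conv_partial_sum_general s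
end
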